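/- arXiv:1210.7063 — 5 statements merged into one kernel-verified Lean document; each statement's English description precedes it below -/
import Mathlib

section
/- For every dimension d ≥ 1 there exists a constant C_d > 0 such that for all β ∈ [0, 1/2], all γ ∈ ℝ, and all t > 0, ∫_{ℝ^d} t^γ (|x|^β ∧ 1) (|x| + t)^{-(d+1)} dx ≤ C_d · t^{γ+β-1}. -/
open MeasureTheory Module

/-!
The truncated weight is dominated by `(|x| + t)^β`, and since `β ≤ 1/2` the surplus
`(|x| + t)^(β - 1/2) ≤ t^(β - 1/2)` can be pulled out, leaving the kernel `(|x| + t)^(-(d + 1/2))`.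
That kernel is integrable on `ℝ^d`, and scaling `x = t y` computes its integral as
`t^(-1/2) ∫ (1 + |y|)^(-(d + 1/2)) dy`, a constant independent of `β` and `γ`.
-/

lemma norm_add_rpow_neg_eq {E : Type*} [SeminormedAddCommGroup E] [NormedSpace ℝ E] {t : ℝ}
    (ht : 0 < t) (s : ℝ) (x : E) :
    (‖x‖ + t) ^ (-s) = t ^ (-s) * (1 + ‖t⁻¹ • x‖) ^ (-s) := by
  rw [norm_smul, norm_inv, Real.norm_of_nonneg ht.le, ← Real.mul_rpow ht.le (by positivity),
    mul_add, mul_one, ← mul_assoc, mul_inv_cancel₀ ht.ne', one_mul, add_comm]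

section NormAddRpow

variable {E : Type*} [NormedAddCommGroup E] [NormedSpace ℝ E] [FiniteDimensional ℝ E]
  [MeasurableSpace E] [BorelSpace E] (μ : Measure E) [μ.IsAddHaarMeasure]

lemma integrable_norm_add_rpow_neg {t s : ℝ} (ht : 0 < t) (hs : (finrank ℝ E : ℝ) < s) :
    Integrable (fun x : E ↦ (‖x‖ + t) ^ (-s)) μ := by
  simp_rw [norm_add_rpow_neg_eq ht s]
  exact ((integrable_one_add_norm hs).comp_smul (inv_ne_zero ht.ne')).const_mul _

lemma integral_norm_add_rpow_neg {t : ℝ} (ht : 0 < t) (s : ℝ) :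
    ∫ x, (‖x‖ + t) ^ (-s) ∂μ = t ^ ((finrank ℝ E : ℝ) - s) * ∫ x, (1 + ‖x‖) ^ (-s) ∂μ := by
  simp_rw [norm_add_rpow_neg_eq ht s]
  rw [integral_const_mul,
    Measure.integral_comp_inv_smul_of_nonneg μ (fun y ↦ (1 + ‖y‖) ^ (-s)) ht.le, smul_eq_mul,
    ← mul_assoc, ← Real.rpow_natCast, ← Real.rpow_add ht, neg_add_eq_sub]

lemma integral_one_add_norm_rpow_neg_pos {s : ℝ} (hs : (finrank ℝ E : ℝ) < s) :
    0 < ∫ x, (1 + ‖x‖) ^ (-s) ∂μ := by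
  have hpos : ∀ x : E, 0 < (1 + ‖x‖) ^ (-s) := fun x ↦ by positivity
  rw [integral_pos_iff_support_of_nonneg (fun x ↦ (hpos x).le) (integrable_one_add_norm hs),
    Function.support_eq_univ fun x ↦ (hpos x).ne']
  exact Measure.measure_univ_pos.2 (NeZero.ne μ)

end NormAddRpow

lemma min_rpow_one_mul_add_rpow_neg_le {β a b r t : ℝ} (hβ : 0 ≤ β) (hβa : β ≤ a) (hr : 0 ≤ r)
    (ht : 0 < t) :
    min (r ^ β) 1 * (r + t) ^ (-b) ≤ t ^ (β - a) * (r + t) ^ (-(b - a)) := by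
  have hrt : 0 < r + t := by positivity
  calc min (r ^ β) 1 * (r + t) ^ (-b)
      ≤ (r + t) ^ β * (r + t) ^ (-b) := by
        gcongr
        exact (min_le_left _ _).trans (Real.rpow_le_rpow hr (by linarith) hβ)
    _ = (r + t) ^ (β - a) * (r + t) ^ (-(b - a)) := by
        rw [← Real.rpow_add hrt, ← Real.rpow_add hrt]; ring_nf
    _ ≤ t ^ (β - a) * (r + t) ^ (-(b - a)) :=
        mul_le_mul_of_nonneg_right
          (Real.rpow_le_rpow_of_nonpos ht (by linarith) (by linarith)) (by positivity)

theorem stmt_0_general (d : ℕ) :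
    ∃ C > (0 : ℝ), ∀ β γ t : ℝ, 0 ≤ β → β ≤ 1/2 → 0 < t →
      (∫ x : EuclideanSpace ℝ (Fin d),
          t ^ γ * (min (‖x‖ ^ β) 1) * (‖x‖ + t) ^ (-((d : ℝ) + 1)))
        ≤ C * t ^ (γ + β - 1) := by
  set s : ℝ := (d : ℝ) + 1 - 1 / 2
  have hs : (finrank ℝ (EuclideanSpace ℝ (Fin d)) : ℝ) < s := by
    rw [finrank_euclideanSpace_fin]; linarith [show s = d + 1 - 1 / 2 from rfl]
  refine ⟨_, integral_one_add_norm_rpow_neg_pos volume hs, fun β γ t hβ0 hβ ht ↦ ?_⟩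
  calc (∫ x : EuclideanSpace ℝ (Fin d), t ^ γ * min (‖x‖ ^ β) 1 * (‖x‖ + t) ^ (-((d : ℝ) + 1)))
      ≤ ∫ x : EuclideanSpace ℝ (Fin d), t ^ γ * (t ^ (β - 1 / 2) * (‖x‖ + t) ^ (-s)) := by
        refine integral_mono_of_nonneg (.of_forall fun x ↦ by positivity)
          (((integrable_norm_add_rpow_neg volume ht hs).const_mul _).const_mul _)
          (.of_forall fun x ↦ ?_)
        dsimp only
        rw [mul_assoc]
        exact mul_le_mul_of_nonneg_left
          (min_rpow_one_mul_add_rpow_neg_le hβ0 hβ (norm_nonneg x) ht) (by positivity)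
    _ = t ^ γ * t ^ (β - 1 / 2) * t ^ ((d : ℝ) - s) *
          ∫ x : EuclideanSpace ℝ (Fin d), (1 + ‖x‖) ^ (-s) := by
        rw [integral_const_mul, integral_const_mul, integral_norm_add_rpow_neg volume ht,
          finrank_euclideanSpace_fin]
        ring
    _ = (∫ x : EuclideanSpace ℝ (Fin d), (1 + ‖x‖) ^ (-s)) * t ^ (γ + β - 1) := by
        rw [← Real.rpow_add ht, ← Real.rpow_add ht, mul_comm]
        congr 2
        ring

theorem stmt_0 (d : ℕ) (hd : 1 ≤ d) :
    ∃ C > (0 : ℝ), ∀ β γ t : ℝ, 0 ≤ β → β ≤ 1/2 → 0 < t →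
      (∫ x : EuclideanSpace ℝ (Fin d),
          t ^ γ * (min (‖x‖ ^ β) 1) * (‖x‖ + t) ^ (-((d : ℝ) + 1)))
        ≤ C * t ^ (γ + β - 1) :=
  stmt_0_general d
end

section
/- There exists a constant C > 0 depending only on d such that for all t, s > 0 and x, y ∈ ℝ^d, [t/(|x|+t)^{d+1}] · [s/(|y|+s)^{d+1}] ≤ C · ( t/(|x|+t)^{d+1} + s/(|y|+s)^{d+1} ) · (t+s)/(|x+y|+t+s)^{d+1}. -/
/-!
The denominator of the third kernel is at most the sum of the other two denominators,
hence at most twice the larger one, say `‖y‖ + s`. So `s / (‖y‖ + s)^e` is bounded by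
`2^e` times the third kernel, and the product of the first two kernels is at most their
sum times that bound.
-/

lemma div_rpow_le_two_rpow_mul_div_rpow {e a b z s u : ℝ} (he : 0 ≤ e) (hs : 0 ≤ s)
    (hsu : s ≤ u) (hz : 0 < z) (hab : a ≤ b) (hzab : z ≤ a + b) :
    s / b ^ e ≤ 2 ^ e * (u / z ^ e) := by
  have hb : 0 < b := by linarith
  have hz_le : z ^ e ≤ 2 ^ e * b ^ e := by
    rw [← Real.mul_rpow zero_le_two hb.le]
    exact Real.rpow_le_rpow hz.le (by linarith) he
  calc s / b ^ e = 2 ^ e * (s / (2 ^ e * b ^ e)) := by field_simp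
    _ ≤ 2 ^ e * (u / z ^ e) := by
      gcongr ?_ * ?_
      exact div_le_div₀ (by linarith) hsu (by positivity) hz_le

lemma div_norm_add_rpow_le_two_rpow_mul {E : Type*} [SeminormedAddCommGroup E] {e t s : ℝ}
    (he : 0 ≤ e) (ht : 0 ≤ t) (hs : 0 < s) {x y : E} (h : ‖x‖ + t ≤ ‖y‖ + s) :
    s / (‖y‖ + s) ^ e ≤ 2 ^ e * ((t + s) / (‖x + y‖ + t + s) ^ e) := by
  have hz : 0 < ‖x + y‖ + t + s := by positivity
  refine div_rpow_le_two_rpow_mul_div_rpow he hs.le (by linarith) hz h ?_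
  linarith [norm_add_le x y]

lemma mul_le_add_mul_of_le {a b c : ℝ} (ha : 0 ≤ a) (hb : 0 ≤ b) (hbc : b ≤ c) :
    a * b ≤ (a + b) * c := by
  nlinarith

theorem stmt_1_general (d : ℕ) :
    ∃ C > (0 : ℝ), ∀ t s : ℝ, 0 < t → 0 < s →
      ∀ x y : EuclideanSpace ℝ (Fin d),
        (t / (‖x‖ + t) ^ ((d : ℝ) + 1)) * (s / (‖y‖ + s) ^ ((d : ℝ) + 1))
          ≤ C * (t / (‖x‖ + t) ^ ((d : ℝ) + 1) + s / (‖y‖ + s) ^ ((d : ℝ) + 1))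
              * ((t + s) / (‖x + y‖ + t + s) ^ ((d : ℝ) + 1)) := by
  set e : ℝ := (d : ℝ) + 1
  have he : 0 ≤ e := by positivity
  refine ⟨2 ^ e, by positivity, fun t s ht hs x y => ?_⟩
  have hρx : 0 ≤ t / (‖x‖ + t) ^ e := by positivity
  have hρy : 0 ≤ s / (‖y‖ + s) ^ e := by positivity
  rcases le_total (‖x‖ + t) (‖y‖ + s) with hxy | hyx
  · linarith [mul_le_add_mul_of_le hρx hρy (div_norm_add_rpow_le_two_rpow_mul he ht.le hs hxy)]
  · have hbound := div_norm_add_rpow_le_two_rpow_mul he hs.le ht hyx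
    rw [add_comm y x, add_comm s t, add_right_comm] at hbound
    linarith [mul_le_add_mul_of_le hρy hρx hbound]

theorem stmt_1 (d : ℕ) (hd : 1 ≤ d) :
    ∃ C > (0 : ℝ), ∀ t s : ℝ, 0 < t → 0 < s →
      ∀ x y : EuclideanSpace ℝ (Fin d),
        (t / (‖x‖ + t) ^ ((d : ℝ) + 1)) * (s / (‖y‖ + s) ^ ((d : ℝ) + 1))
          ≤ C * (t / (‖x‖ + t) ^ ((d : ℝ) + 1) + s / (‖y‖ + s) ^ ((d : ℝ) + 1))
              * ((t + s) / (‖x + y‖ + t + s) ^ ((d : ℝ) + 1)) :=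
  stmt_1_general d
end

section
/- Let d ≥ 1, γ > 0, and p, q ∈ [1, ∞] satisfy d/p + 1/q < γ. Then for every f ∈ L^q(ℝ; L^p(ℝ^d)), one has lim_{ε↓0} sup_{(t,x)} ∫_0^ε ∫_{ℝ^d} s^γ (|y|+s)^{-(d+1)} |f(t-s, x-y)| dy ds = 0 (and likewise with t+s in place of t-s); i.e. L^q(ℝ; L^p(ℝ^d)) ⊂ 𝕂^γ_d. -/
/-!
For fixed `s > 0`, Hölder's inequality in `y` bounds the inner integral by
`‖(‖·‖ + s) ^ (-(d+1))‖_{p'} ‖f (t ∓ s)‖_p`, and the dilation `y = s z` gives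
`‖(‖·‖ + s) ^ (-(d+1))‖_{p'} = C s ^ (-1 - d/p)` with `C < ∞`. Hölder's inequality in `s` then
bounds the whole integral, uniformly in `(t, x)`, by
`C ‖s ^ (γ - 1 - d/p)‖_{L^{q'}(0, ε)} ‖f‖_{L^q L^p}`. The condition `d/p + 1/q < γ` says exactly
that `s ^ (γ - 1 - d/p)` lies in `L^{q'}(0, 1)`, so this norm tends to `0` with `ε`.
-/

open MeasureTheory ENNReal Set Filter Topology Module

namespace ENNReal

lemma exists_holderConjugate {p : ℝ≥0∞} (hp : 1 ≤ p) : ∃ q, p.HolderConjugate q :=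
  ⟨(1 - p⁻¹)⁻¹, holderConjugate_iff.2 <| by
    rw [inv_inv, add_tsub_cancel_of_le (ENNReal.inv_le_one.2 hp)]⟩

lemma HolderConjugate.toReal_inv_add_toReal_inv (p q : ℝ≥0∞) [p.HolderConjugate q] :
    p⁻¹.toReal + q⁻¹.toReal = 1 := by
  rw [← toReal_add (inv_ne_top.2 (HolderConjugate.ne_zero p q))
    (inv_ne_top.2 (HolderConjugate.ne_zero q p)), HolderConjugate.inv_add_inv_eq_one, toReal_one]

end ENNReal

section Dilation

variable {E F : Type*} [NormedAddCommGroup E] [NormedSpace ℝ E] [MeasurableSpace E] [BorelSpace E]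
  [FiniteDimensional ℝ E] (μ : Measure E) [μ.IsAddHaarMeasure] [NormedAddCommGroup F]

theorem eLpNorm_comp_inv_smul {g : E → F} (hg : AEStronglyMeasurable g μ) {r : ℝ} (hr : 0 < r)
    (p : ℝ≥0∞) :
    eLpNorm (fun y ↦ g (r⁻¹ • y)) p μ
      = ENNReal.ofReal (r ^ (finrank ℝ E * p⁻¹.toReal)) * eLpNorm g p μ := by
  have hmap : Measure.map (r⁻¹ • ·) μ = ENNReal.ofReal (r ^ finrank ℝ E) • μ := by
    rw [Measure.map_addHaar_smul μ (inv_ne_zero hr.ne'), inv_pow, inv_inv,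
      abs_of_pos (by positivity)]
  rw [← Function.comp_def, ← eLpNorm_map_measure (hmap ▸ hg.smul_measure _)
    (measurable_const_smul _).aemeasurable, hmap,
    eLpNorm_smul_measure_of_ne_zero (by simp; positivity), one_div, smul_eq_mul,
    ofReal_rpow_of_pos (by positivity), ← Real.rpow_natCast, ← Real.rpow_mul hr.le]

theorem eLpNorm_norm_add_rpow_neg {s : ℝ} (hs : 0 < s) (ρ : ℝ) (p : ℝ≥0∞) :
    eLpNorm (fun y : E ↦ (‖y‖ + s) ^ (-ρ)) p μ
      = ENNReal.ofReal (s ^ (finrank ℝ E * p⁻¹.toReal - ρ))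
        * eLpNorm (fun y : E ↦ (1 + ‖y‖) ^ (-ρ)) p μ := by
  have hscale : (fun y : E ↦ (‖y‖ + s) ^ (-ρ))
      = s ^ (-ρ) • fun y : E ↦ (1 + ‖s⁻¹ • y‖) ^ (-ρ) := by
    ext y
    rw [Pi.smul_apply, smul_eq_mul, ← Real.mul_rpow hs.le (by positivity), norm_smul,
      Real.norm_of_nonneg (inv_nonneg.2 hs.le), mul_add, mul_one, mul_inv_cancel_left₀ hs.ne',
      add_comm]
  rw [hscale, eLpNorm_const_smul, eLpNorm_comp_inv_smul μ (g := fun y : E ↦ (1 + ‖y‖) ^ (-ρ))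
      (by fun_prop : Measurable _).aestronglyMeasurable hs,
    Real.enorm_of_nonneg (by positivity), ← mul_assoc, ← ofReal_mul (by positivity),
    ← Real.rpow_add hs, sub_eq_neg_add, add_comm]

theorem memLp_one_add_norm_rpow_neg {ρ : ℝ} (hρ : (finrank ℝ E : ℝ) < ρ) {p : ℝ≥0∞}
    (hp : 1 ≤ p) : MemLp (fun y : E ↦ (1 + ‖y‖) ^ (-ρ)) p μ := by
  have hρ0 : 0 ≤ ρ := (Nat.cast_nonneg _).trans hρ.le
  have hmeas : AEStronglyMeasurable (fun y : E ↦ (1 + ‖y‖) ^ (-ρ)) μ :=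
    (by fun_prop : Measurable _).aestronglyMeasurable
  rcases eq_or_ne p ∞ with rfl | hp_top
  · refine memLp_top_of_bound hmeas 1 (ae_of_all _ fun y ↦ ?_)
    rw [Real.norm_of_nonneg (by positivity)]
    exact Real.rpow_le_one_of_one_le_of_nonpos (by simp) (neg_nonpos.2 hρ0)
  have hp1 : 1 ≤ p.toReal := by
    simpa using (toReal_le_toReal one_ne_top hp_top).2 hp
  refine (integrable_norm_rpow_iff hmeas (by positivity) hp_top).1 ?_
  refine (integrable_one_add_norm (r := ρ * p.toReal) (by nlinarith)).congr
    (ae_of_all _ fun y ↦ ?_)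
  dsimp only
  rw [Real.norm_of_nonneg (by positivity), ← Real.rpow_mul (by positivity), neg_mul]

end Dilation

theorem setLIntegral_enorm_mul_comp_le {α β : Type*} [MeasurableSpace α] [MeasurableSpace β]
    {μ : Measure α} {ν : Measure β} {w : α → ℝ} {g : β → ℝ} {φ : α → β}
    (hw : AEStronglyMeasurable w μ) (hg : AEStronglyMeasurable g ν) (hφ : MeasurePreserving φ μ ν)
    (S : Set α) (p q : ℝ≥0∞) [p.HolderConjugate q] :
    ∫⁻ a in S, ‖w a * g (φ a)‖ₑ ∂μ ≤ eLpNorm w p (μ.restrict S) * eLpNorm g q ν := by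
  calc ∫⁻ a in S, ‖w a * g (φ a)‖ₑ ∂μ = eLpNorm (w • (g ∘ φ)) 1 (μ.restrict S) := by
        rw [eLpNorm_one_eq_lintegral_enorm]; rfl
    _ ≤ eLpNorm w p (μ.restrict S) * eLpNorm (g ∘ φ) q (μ.restrict S) :=
        eLpNorm_smul_le_mul_eLpNorm (hg.comp_measurePreserving hφ).restrict hw.restrict
    _ ≤ eLpNorm w p (μ.restrict S) * eLpNorm g q ν := by
        rw [← eLpNorm_comp_measurePreserving (p := q) hg hφ]
        gcongr
        exact Measure.restrict_le_self

theorem tendsto_ofReal_rpow_nhdsGT_zero {κ : ℝ} (hκ : 0 < κ) :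
    Tendsto (fun ε : ℝ ↦ ENNReal.ofReal (ε ^ κ)) (𝓝[>] 0) (𝓝 0) := by
  have := (ENNReal.tendsto_ofReal (Real.continuousAt_rpow_const 0 κ (Or.inr hκ.le)).tendsto
    ).mono_left (nhdsWithin_le_nhds (s := Ioi 0))
  rwa [Real.zero_rpow hκ.ne', ofReal_zero] at this

theorem setLIntegral_Ioc_rpow {θ : ℝ} (hθ : -1 < θ) {ε : ℝ} (hε : 0 < ε) :
    ∫⁻ s in Ioc 0 ε, ENNReal.ofReal (s ^ θ)
      = ENNReal.ofReal ((θ + 1)⁻¹) * ENNReal.ofReal (ε ^ (θ + 1)) := by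
  rw [← ofReal_integral_eq_lintegral_ofReal
      (intervalIntegral.intervalIntegrable_rpow' (a := 0) (b := ε) hθ).1
      ((ae_restrict_mem measurableSet_Ioc).mono fun s hs ↦ Real.rpow_nonneg hs.1.le θ),
    ← intervalIntegral.integral_of_le hε.le, integral_rpow (Or.inl hθ),
    Real.zero_rpow (by linarith), sub_zero, div_eq_inv_mul,
    ofReal_mul (inv_pos.2 (by linarith)).le]

theorem tendsto_eLpNorm_rpow_restrict_Ioc {β : ℝ} {r : ℝ≥0∞} (hβ : -r⁻¹.toReal < β) :
    Tendsto (fun ε ↦ eLpNorm (fun s : ℝ ↦ s ^ β) r (volume.restrict (Ioc 0 ε))) (𝓝[>] 0)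
      (𝓝 0) := by
  rcases eq_or_ne r 0 with rfl | hr0
  · simp
  rcases eq_or_ne r ∞ with rfl | hr_top
  · simp only [inv_top, toReal_zero, neg_zero] at hβ
    refine tendsto_of_tendsto_of_tendsto_of_le_of_le' tendsto_const_nhds
      (tendsto_ofReal_rpow_nhdsGT_zero hβ) (.of_forall fun _ ↦ bot_le) ?_
    filter_upwards [self_mem_nhdsWithin] with ε hε
    refine (eLpNorm_exponent_top (f := fun s : ℝ ↦ s ^ β)).trans_le
      (eLpNormEssSup_le_of_ae_bound ?_)
    filter_upwards [ae_restrict_mem measurableSet_Ioc] with s hs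
    rw [Real.norm_of_nonneg (Real.rpow_nonneg hs.1.le β)]
    exact Real.rpow_le_rpow hs.1.le hs.2 hβ.le
  have hr : 0 < r.toReal := toReal_pos hr0 hr_top
  have hθ : -1 < β * r.toReal := by
    rw [toReal_inv] at hβ
    have := mul_lt_mul_of_pos_right hβ hr
    rwa [neg_mul, inv_mul_cancel₀ hr.ne'] at this
  have hlint : Tendsto (fun ε : ℝ ↦ ∫⁻ s in Ioc 0 ε, ENNReal.ofReal (s ^ (β * r.toReal)))
      (𝓝[>] 0) (𝓝 0) := by
    have := ENNReal.Tendsto.const_mul (a := ENNReal.ofReal ((β * r.toReal + 1)⁻¹))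
      (tendsto_ofReal_rpow_nhdsGT_zero (κ := β * r.toReal + 1) (by linarith))
      (Or.inr ofReal_ne_top)
    rw [mul_zero] at this
    refine this.congr' ?_
    filter_upwards [self_mem_nhdsWithin] with ε hε
    exact (setLIntegral_Ioc_rpow hθ hε).symm
  have := (ENNReal.continuous_rpow_const (y := 1 / r.toReal)).tendsto 0 |>.comp hlint
  rw [zero_rpow_of_pos (by positivity)] at this
  refine this.congr' ?_
  filter_upwards [self_mem_nhdsWithin] with ε hε
  rw [Function.comp_apply, eLpNorm_eq_lintegral_rpow_enorm_toReal hr0 hr_top]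
  congr 1
  refine setLIntegral_congr_fun measurableSet_Ioc fun s hs ↦ ?_
  rw [Real.enorm_of_nonneg (Real.rpow_nonneg hs.1.le β), ofReal_rpow_of_nonneg
    (Real.rpow_nonneg hs.1.le β) hr.le, ← Real.rpow_mul hs.1.le]

section Kato

variable {E : Type*} [NormedAddCommGroup E] [NormedSpace ℝ E] [MeasurableSpace E] [BorelSpace E]
  [FiniteDimensional ℝ E] (μ : Measure E) [μ.IsAddHaarMeasure] {p p' : ℝ≥0∞} [p.HolderConjugate p']

theorem enorm_integral_kernel_le (γ : ℝ) {s : ℝ} (hs : 0 < s) {h : E → ℝ}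
    (hh : AEStronglyMeasurable h μ) (x : E) :
    ‖∫ y, s ^ γ * (‖y‖ + s) ^ (-((finrank ℝ E : ℝ) + 1)) * |h (x - y)| ∂μ‖ₑ
      ≤ eLpNorm (fun y : E ↦ (1 + ‖y‖) ^ (-((finrank ℝ E : ℝ) + 1))) p' μ
        * ENNReal.ofReal (s ^ (γ - 1 - finrank ℝ E * p⁻¹.toReal)) * eLpNorm h p μ := by
  set K : E → ℝ := fun y ↦ (‖y‖ + s) ^ (-((finrank ℝ E : ℝ) + 1))
  have hK : AEStronglyMeasurable K μ := (by fun_prop : Measurable K).aestronglyMeasurable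
  have hexp : γ + (finrank ℝ E * p'⁻¹.toReal - (finrank ℝ E + 1))
      = γ - 1 - finrank ℝ E * p⁻¹.toReal := by
    linear_combination (finrank ℝ E : ℝ) * HolderConjugate.toReal_inv_add_toReal_inv p p'
  calc ‖∫ y, s ^ γ * K y * |h (x - y)| ∂μ‖ₑ
      ≤ ∫⁻ y, ‖s ^ γ * K y * |h (x - y)|‖ₑ ∂μ := enorm_integral_le_lintegral_enorm _
    _ = ENNReal.ofReal (s ^ γ) * ∫⁻ y in univ, ‖K y * h (x - y)‖ₑ ∂μ := by
        rw [Measure.restrict_univ, ← lintegral_const_mul' _ _ ofReal_ne_top]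
        refine lintegral_congr fun y ↦ ?_
        rw [mul_assoc, enorm_mul, enorm_mul, enorm_mul, Real.enorm_of_nonneg (by positivity),
          Real.enorm_abs]
    _ ≤ ENNReal.ofReal (s ^ γ) * (eLpNorm K p' μ * eLpNorm h p μ) := by
        gcongr
        simpa using setLIntegral_enorm_mul_comp_le hK hh
          (Measure.measurePreserving_sub_left μ x) univ p' p
    _ = _ := by
        rw [eLpNorm_norm_add_rpow_neg μ hs, ← mul_assoc, ← mul_assoc,
          ← ofReal_mul (by positivity), ← Real.rpow_add hs, hexp, mul_comm (ENNReal.ofReal _)]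

theorem ofReal_kato_integral_le {q q' : ℝ≥0∞} [q.HolderConjugate q'] (γ ε : ℝ)
    {f : ℝ → E → ℝ} (hfp : ∀ t, MemLp (f t) p μ)
    (hg : AEStronglyMeasurable (fun t ↦ (eLpNorm (f t) p μ).toReal) volume)
    {φ : ℝ → ℝ} (hφ : MeasurePreserving φ volume volume) (x : E) :
    ENNReal.ofReal (∫ s in Ioc 0 ε, ∫ y,
        s ^ γ * (‖y‖ + s) ^ (-((finrank ℝ E : ℝ) + 1)) * |f (φ s) (x - y)| ∂μ)
      ≤ eLpNorm (fun y : E ↦ (1 + ‖y‖) ^ (-((finrank ℝ E : ℝ) + 1))) p' μ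
        * (eLpNorm (fun s : ℝ ↦ s ^ (γ - 1 - finrank ℝ E * p⁻¹.toReal)) q'
            (volume.restrict (Ioc 0 ε))
          * eLpNorm (fun t ↦ (eLpNorm (f t) p μ).toReal) q volume) := by
  set g : ℝ → ℝ := fun t ↦ (eLpNorm (f t) p μ).toReal
  set β := γ - 1 - finrank ℝ E * p⁻¹.toReal
  set C := eLpNorm (fun y : E ↦ (1 + ‖y‖) ^ (-((finrank ℝ E : ℝ) + 1))) p' μ
  have hw : AEStronglyMeasurable (fun s : ℝ ↦ s ^ β) volume :=
    (by fun_prop : Measurable fun s : ℝ ↦ s ^ β).aestronglyMeasurable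
  -- Bounding `ofReal` of the Bochner integrals by lower integrals needs no integrability.
  calc ENNReal.ofReal (∫ s in Ioc 0 ε, ∫ y,
          s ^ γ * (‖y‖ + s) ^ (-((finrank ℝ E : ℝ) + 1)) * |f (φ s) (x - y)| ∂μ)
      ≤ ∫⁻ s in Ioc 0 ε, ‖∫ y,
          s ^ γ * (‖y‖ + s) ^ (-((finrank ℝ E : ℝ) + 1)) * |f (φ s) (x - y)| ∂μ‖ₑ :=
        (Real.ofReal_le_enorm _).trans (enorm_integral_le_lintegral_enorm _)
    _ ≤ ∫⁻ s in Ioc 0 ε, C * ‖s ^ β * g (φ s)‖ₑ := by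
        refine setLIntegral_mono' measurableSet_Ioc fun s hs ↦ ?_
        refine (enorm_integral_kernel_le μ (p := p) (p' := p') γ hs.1 (hfp (φ s)).1 x
          ).trans_eq ?_
        rw [mul_assoc, enorm_mul, Real.enorm_of_nonneg (Real.rpow_nonneg hs.1.le β),
          Real.enorm_of_nonneg toReal_nonneg, ofReal_toReal (hfp (φ s)).2.ne]
    _ = C * ∫⁻ s in Ioc 0 ε, ‖s ^ β * g (φ s)‖ₑ :=
        lintegral_const_mul'' _ (hw.mul (hg.comp_measurePreserving hφ)).enorm.restrict
    _ ≤ C * (eLpNorm (fun s : ℝ ↦ s ^ β) q' (volume.restrict (Ioc 0 ε))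
          * eLpNorm g q volume) := by
        gcongr
        exact setLIntegral_enorm_mul_comp_le hw hg hφ (Ioc 0 ε) q' q

end Kato

theorem neg_toReal_inv_lt_of_div_add_div_lt {d : ℕ} {γ : ℝ} {p q q' : ℝ≥0∞}
    [q.HolderConjugate q'] (hpq : (d : ℝ≥0∞) / p + 1 / q < ENNReal.ofReal γ) :
    -q'⁻¹.toReal < γ - 1 - d * p⁻¹.toReal := by
  have hfin := ENNReal.add_ne_top.1 (hpq.trans_le le_top).ne
  rw [lt_ofReal_iff_toReal_lt (hpq.trans_le le_top).ne, toReal_add hfin.1 hfin.2, div_eq_mul_inv,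
    toReal_mul, toReal_natCast, one_div] at hpq
  linarith [HolderConjugate.toReal_inv_add_toReal_inv q q']

theorem stmt_5_general (d : ℕ) (γ : ℝ) (p q : ℝ≥0∞)
    (hp : 1 ≤ p) (hq : 1 ≤ q)
    (hpq : (d : ℝ≥0∞) / p + 1 / q < ENNReal.ofReal γ)
    (f : ℝ → EuclideanSpace ℝ (Fin d) → ℝ)
    (hfp : ∀ t : ℝ, MemLp (f t) p volume)
    (hfq : MemLp (fun t : ℝ => (eLpNorm (f t) p volume).toReal) q volume) :
    ∀ δ > (0 : ℝ), ∃ ε > (0 : ℝ), ∀ t : ℝ, ∀ x : EuclideanSpace ℝ (Fin d),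
      (∫ s in Set.Ioc (0:ℝ) ε, ∫ y : EuclideanSpace ℝ (Fin d),
          s ^ γ * (‖y‖ + s) ^ (-((d : ℝ) + 1)) * |f (t - s) (x - y)|) ≤ δ
      ∧ (∫ s in Set.Ioc (0:ℝ) ε, ∫ y : EuclideanSpace ℝ (Fin d),
          s ^ γ * (‖y‖ + s) ^ (-((d : ℝ) + 1)) * |f (t + s) (x - y)|) ≤ δ := by
  obtain ⟨p', _⟩ := exists_holderConjugate hp
  obtain ⟨q', _⟩ := exists_holderConjugate hq
  have hC := memLp_one_add_norm_rpow_neg (volume : Measure (EuclideanSpace ℝ (Fin d)))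
    (ρ := d + 1) (by simp) (HolderConjugate.one_le p' p) |>.eLpNorm_lt_top.ne
  have hbound := ENNReal.Tendsto.const_mul (ENNReal.Tendsto.mul_const
    (tendsto_eLpNorm_rpow_restrict_Ioc (neg_toReal_inv_lt_of_div_add_div_lt (q' := q') hpq))
    (Or.inr hfq.eLpNorm_lt_top.ne)) (Or.inr hC)
  rw [zero_mul, mul_zero] at hbound
  intro δ hδ
  obtain ⟨ε, hεδ, hε⟩ := ((hbound.eventually (gt_mem_nhds (ofReal_pos.2 hδ))).and
    self_mem_nhdsWithin).exists
  have hkato (φ : ℝ → ℝ) (hφ : MeasurePreserving φ volume volume) (x) :=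
    ofReal_kato_integral_le volume (p' := p') (q := q) (q' := q') γ ε hfp hfq.1 hφ x
  simp only [finrank_euclideanSpace_fin] at hkato
  refine ⟨ε, hε, fun t x ↦ ⟨?_, ?_⟩⟩ <;>
    refine (ofReal_le_ofReal_iff hδ.le).1 ((hkato _ ?_ x).trans hεδ.le)
  exacts [Measure.measurePreserving_sub_left volume t, measurePreserving_add_left volume t]

theorem stmt_5 (d : ℕ) (hd : 1 ≤ d) (γ : ℝ) (hγ : 0 < γ) (p q : ℝ≥0∞)
    (hp : 1 ≤ p) (hq : 1 ≤ q)
    (hpq : (d : ℝ≥0∞) / p + 1 / q < ENNReal.ofReal γ)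
    (f : ℝ → EuclideanSpace ℝ (Fin d) → ℝ)
    (hfmeas : Measurable (Function.uncurry f))
    (hfp : ∀ t : ℝ, MemLp (f t) p volume)
    (hfq : MemLp (fun t : ℝ => (eLpNorm (f t) p volume).toReal) q volume) :
    ∀ δ > (0 : ℝ), ∃ ε > (0 : ℝ), ∀ t : ℝ, ∀ x : EuclideanSpace ℝ (Fin d),
      (∫ s in Set.Ioc (0:ℝ) ε, ∫ y : EuclideanSpace ℝ (Fin d),
          s ^ γ * (‖y‖ + s) ^ (-((d : ℝ) + 1)) * |f (t - s) (x - y)|) ≤ δ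
      ∧ (∫ s in Set.Ioc (0:ℝ) ε, ∫ y : EuclideanSpace ℝ (Fin d),
          s ^ γ * (‖y‖ + s) ^ (-((d : ℝ) + 1)) * |f (t + s) (x - y)|) ≤ δ :=
  stmt_5_general d γ p q hp hq hpq f hfp hfq
end

section
/- Under the assumptions a₀ ≤ a ≤ a₁, |b| ≤ b₁, with p₀(t,x;s,y) := ρ(∫_s^t a(r,y)dr, x-y+∫_s^t b(r,y)dr), there is a constant C > 0 such that for all 0 ≤ s < t ≤ T and x,y ∈ ℝ^d: |∇_x p₀(t,x;s,y)| ≤ C (t-s)(|x-y|+(t-s))^{-(d+2)}. -/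
open MeasureTheory Real

noncomputable def poissonKernelRd (d : ℕ) (t : ℝ) (x : EuclideanSpace ℝ (Fin d)) : ℝ :=
  Real.pi ^ (-((d : ℝ) + 1) / 2) * Real.Gamma (((d : ℝ) + 1) / 2)
    * t * (‖x‖ ^ 2 + t ^ 2) ^ (-(((d : ℝ) + 1) / 2))

noncomputable def p₀ (d : ℕ) (a : ℝ → EuclideanSpace ℝ (Fin d) → ℝ)
    (b : ℝ → EuclideanSpace ℝ (Fin d) → EuclideanSpace ℝ (Fin d))
    (t : ℝ) (x : EuclideanSpace ℝ (Fin d)) (s : ℝ) (y : EuclideanSpace ℝ (Fin d)) : ℝ :=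
  poissonKernelRd d (∫ r in s..t, a r y) (x - y + ∫ r in s..t, b r y)

/-! The gradient of the Poisson kernel is `∇P_A(z) = -c_d (d+1) A (|z|² + A²)^{-(d+3)/2} z`, and
`|z|² + A² ≥ (|z| + A)²/2` turns its norm into `≲ A (|z| + A)^{-(d+2)}`. For `p₀` we take
`A = ∫ₛᵗ a ∈ [a₀(t-s), a₁(t-s)]` and `z = x - y + B` with `|B| ≤ b₁(t-s)`; then
`|x - y| + (t-s) ≤ M (|z| + A)` with `M = max 1 ((b₁+1)/a₀)`, which converts the bound in `(z, A)`
into the claimed one in `(x - y, t - s)`. -/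

lemma rpow_neg_sq_add_sq_le {u w k : ℝ} (hu : 0 ≤ u) (hw : 0 < w) (hk : 0 ≤ k) :
    (u ^ 2 + w ^ 2) ^ (-k) ≤ 2 ^ k * (u + w) ^ (-(2 * k)) := by
  have hsq : (u + w) ^ 2 / 2 ≤ u ^ 2 + w ^ 2 := by nlinarith [sq_nonneg (u - w)]
  calc (u ^ 2 + w ^ 2) ^ (-k) ≤ ((u + w) ^ 2 / 2) ^ (-k) :=
        Real.rpow_le_rpow_of_nonpos (by positivity) hsq (by linarith)
    _ = 2 ^ k * (u + w) ^ (-(2 * k)) := by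
        rw [Real.div_rpow (by positivity) zero_le_two, ← Real.rpow_natCast,
          ← Real.rpow_mul (by positivity), Real.rpow_neg zero_le_two, div_inv_eq_mul]
        push_cast; ring_nf

lemma mul_rpow_neg_add_one_le {c u q : ℝ} (hc : 0 ≤ c) (hcu : c ≤ u) :
    c * u ^ (-(q + 1)) ≤ u ^ (-q) := by
  rcases (hc.trans hcu).lt_or_eq' with hu | rfl
  · calc c * u ^ (-(q + 1)) ≤ u * u ^ (-(q + 1)) := by gcongr
      _ = u ^ (-q) := by rw [mul_comm, ← Real.rpow_add_one hu.ne']; ring_nf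
  · simp [le_antisymm hcu hc, Real.rpow_nonneg]

lemma rpow_neg_le_mul_rpow_neg {u v M q : ℝ} (hv : 0 < v) (hM : 0 < M) (hvu : v ≤ M * u)
    (hq : 0 ≤ q) : u ^ (-q) ≤ M ^ q * v ^ (-q) := by
  calc u ^ (-q) ≤ (v / M) ^ (-q) :=
        Real.rpow_le_rpow_of_nonpos (by positivity) (by rwa [div_le_iff₀' hM]) (by linarith)
    _ = M ^ q * v ^ (-q) := by
        rw [Real.div_rpow hv.le hM.le, Real.rpow_neg hM.le, div_inv_eq_mul, mul_comm]

lemma intervalIntegral_mem_Icc_of_mem_Icc {f : ℝ → ℝ} {s t lo hi : ℝ} (hf : Measurable f)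
    (hst : s ≤ t) (hbd : ∀ r ∈ Set.Icc s t, f r ∈ Set.Icc lo hi) :
    ∫ r in s..t, f r ∈ Set.Icc (lo * (t - s)) (hi * (t - s)) := by
  have hint : IntervalIntegrable f volume s t := by
    refine (intervalIntegrable_const (c := max |lo| |hi|)).mono_fun'
      hf.aestronglyMeasurable ?_
    refine ae_restrict_of_forall_mem measurableSet_uIoc fun r hr => ?_
    rw [Set.uIoc_of_le hst] at hr
    obtain ⟨hlo, hhi⟩ := hbd r (Set.Ioc_subset_Icc_self hr)
    exact abs_le_max_abs_abs hlo hhi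
  constructor
  · simpa [mul_comm] using intervalIntegral.integral_mono_on hst intervalIntegrable_const hint
      fun r hr => (hbd r hr).1
  · simpa [mul_comm] using intervalIntegral.integral_mono_on hst hint intervalIntegrable_const
      fun r hr => (hbd r hr).2

lemma norm_add_le_mul_norm_add {E : Type*} [SeminormedAddCommGroup E] {w B : E}
    {A τ a₀ b₁ : ℝ} (ha₀ : 0 < a₀) (hb₁ : 0 ≤ b₁) (hτ : 0 ≤ τ) (hA : a₀ * τ ≤ A)
    (hB : ‖B‖ ≤ b₁ * τ) : ‖w‖ + τ ≤ max 1 ((b₁ + 1) / a₀) * (‖w + B‖ + A) := by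
  have hw : ‖w‖ ≤ ‖w + B‖ + ‖B‖ := by
    simpa using norm_le_norm_add_norm_sub (w + B) w
  have hτA : (b₁ + 1) * τ ≤ (b₁ + 1) / a₀ * A := by
    rw [div_mul_eq_mul_div, le_div_iff₀ ha₀]; nlinarith
  have hA₀ : 0 ≤ A := by nlinarith
  calc ‖w‖ + τ ≤ ‖w + B‖ + (b₁ + 1) / a₀ * A := by linarith
    _ ≤ max 1 ((b₁ + 1) / a₀) * ‖w + B‖ + max 1 ((b₁ + 1) / a₀) * A := by
        gcongr
        · exact le_mul_of_one_le_left (norm_nonneg _) (le_max_left _ _)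
        · exact le_max_right _ _
    _ = max 1 ((b₁ + 1) / a₀) * (‖w + B‖ + A) := by ring

noncomputable def poissonConst (d : ℕ) : ℝ :=
  Real.pi ^ (-((d : ℝ) + 1) / 2) * Real.Gamma (((d : ℝ) + 1) / 2)

lemma poissonConst_pos (d : ℕ) : 0 < poissonConst d :=
  mul_pos (Real.rpow_pos_of_pos Real.pi_pos _) (Real.Gamma_pos_of_pos (by positivity))

section PoissonKernel

variable {d : ℕ} {t : ℝ} {x : EuclideanSpace ℝ (Fin d)}

lemma hasFDerivAt_poissonKernelRd (ht : t ≠ 0) :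
    HasFDerivAt (poissonKernelRd d t)
      ((-(poissonConst d * ((d : ℝ) + 1) * t * (‖x‖ ^ 2 + t ^ 2) ^ (-(((d : ℝ) + 1) / 2) - 1)))
        • innerSL ℝ x) x := by
  have hpos : ‖x‖ ^ 2 + t ^ 2 ≠ 0 := by positivity
  have h := (((hasStrictFDerivAt_norm_sq x).hasFDerivAt.add_const (t ^ 2)).rpow_const
    (p := -(((d : ℝ) + 1) / 2)) (Or.inl hpos)).const_mul (poissonConst d * t)
  refine h.congr_fderiv ?_
  module

lemma norm_fderiv_poissonKernelRd (ht : t ≠ 0) :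
    ‖fderiv ℝ (poissonKernelRd d t) x‖
      = poissonConst d * ((d : ℝ) + 1) * |t| * ‖x‖
        * (‖x‖ ^ 2 + t ^ 2) ^ (-(((d : ℝ) + 3) / 2)) := by
  rw [(hasFDerivAt_poissonKernelRd ht).fderiv, norm_smul, innerSL_apply_norm, norm_neg,
    Real.norm_eq_abs, abs_mul, abs_mul, abs_mul, abs_of_pos (poissonConst_pos d),
    abs_of_pos (by positivity : (0 : ℝ) < (d : ℝ) + 1),
    abs_of_nonneg (Real.rpow_nonneg (by positivity) _)]
  ring_nf

lemma norm_fderiv_poissonKernelRd_le (ht : 0 < t) :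
    ‖fderiv ℝ (poissonKernelRd d t) x‖
      ≤ poissonConst d * ((d : ℝ) + 1) * 2 ^ (((d : ℝ) + 3) / 2) * t
        * (‖x‖ + t) ^ (-((d : ℝ) + 2)) := by
  have hsq := rpow_neg_sq_add_sq_le (norm_nonneg x) ht (k := ((d : ℝ) + 3) / 2) (by positivity)
  have hx := mul_rpow_neg_add_one_le (norm_nonneg x) (le_add_of_nonneg_right ht.le)
    (q := (d : ℝ) + 2)
  have hc := poissonConst_pos d
  rw [norm_fderiv_poissonKernelRd ht.ne', abs_of_pos ht]
  calc poissonConst d * ((d : ℝ) + 1) * t * ‖x‖ * (‖x‖ ^ 2 + t ^ 2) ^ (-(((d : ℝ) + 3) / 2))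
      ≤ poissonConst d * ((d : ℝ) + 1) * t * ‖x‖
          * (2 ^ (((d : ℝ) + 3) / 2) * (‖x‖ + t) ^ (-(2 * (((d : ℝ) + 3) / 2)))) := by
        gcongr
    _ = poissonConst d * ((d : ℝ) + 1) * 2 ^ (((d : ℝ) + 3) / 2) * t
          * (‖x‖ * (‖x‖ + t) ^ (-((d : ℝ) + 2 + 1))) := by ring_nf
    _ ≤ _ := by gcongr

end PoissonKernel

lemma fderiv_p₀ {d : ℕ} (a : ℝ → EuclideanSpace ℝ (Fin d) → ℝ)
    (b : ℝ → EuclideanSpace ℝ (Fin d) → EuclideanSpace ℝ (Fin d))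
    (t s : ℝ) (x y : EuclideanSpace ℝ (Fin d)) :
    fderiv ℝ (fun x' => p₀ d a b t x' s y) x
      = fderiv ℝ (poissonKernelRd d (∫ r in s..t, a r y)) (x - y + ∫ r in s..t, b r y) := by
  have hshift : (fun x' => p₀ d a b t x' s y)
      = fun x' => poissonKernelRd d (∫ r in s..t, a r y) (x' + ((∫ r in s..t, b r y) - y)) := by
    funext x'
    rw [p₀, add_sub_assoc', sub_add_eq_add_sub]
  rw [hshift, fderiv_comp_add_right, add_sub_assoc', sub_add_eq_add_sub]

theorem stmt_12_general (d : ℕ)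
    (a : ℝ → EuclideanSpace ℝ (Fin d) → ℝ)
    (b : ℝ → EuclideanSpace ℝ (Fin d) → EuclideanSpace ℝ (Fin d))
    (ha : Measurable (Function.uncurry a))
    (a₀ a₁ b₁ : ℝ) (ha₀ : 0 < a₀) (ha₁ : 0 < a₁) (hb₁ : 0 < b₁)
    (haBound : ∀ r : ℝ, ∀ y, 0 ≤ r → a₀ ≤ a r y ∧ a r y ≤ a₁)
    (hbBound : ∀ r : ℝ, ∀ y, 0 ≤ r → ‖b r y‖ ≤ b₁) (T : ℝ) :
    ∃ C > (0 : ℝ), ∀ s t : ℝ, 0 ≤ s → s < t → t ≤ T →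
      ∀ x y : EuclideanSpace ℝ (Fin d),
        ‖fderiv ℝ (fun x' => p₀ d a b t x' s y) x‖
          ≤ C * (t - s) * (‖x - y‖ + (t - s)) ^ (-((d : ℝ) + 2)) := by
  set M := max 1 ((b₁ + 1) / a₀)
  have hM : 0 < M := one_pos.trans_le (le_max_left _ _)
  have hc := poissonConst_pos d
  refine ⟨poissonConst d * ((d : ℝ) + 1) * 2 ^ (((d : ℝ) + 3) / 2) * a₁ * M ^ ((d : ℝ) + 2),
    by positivity, fun s t hs hst _ x y => ?_⟩
  have hτ : 0 < t - s := sub_pos.mpr hst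
  have hay : Measurable fun r => a r y := ha.comp (measurable_id.prodMk measurable_const)
  obtain ⟨hA₀, hA₁⟩ := intervalIntegral_mem_Icc_of_mem_Icc hay hst.le
    fun r hr => haBound r y (hs.trans hr.1)
  have hB : ‖∫ r in s..t, b r y‖ ≤ b₁ * (t - s) := by
    have h := intervalIntegral.norm_integral_le_of_norm_le_const
      fun r hr => hbBound r y (hs.trans (Set.uIoc_of_le hst.le ▸ hr).1.le)
    rwa [abs_of_pos hτ] at h
  have hA : 0 < ∫ r in s..t, a r y := (mul_pos ha₀ hτ).trans_le hA₀
  rw [fderiv_p₀]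
  calc _ ≤ poissonConst d * ((d : ℝ) + 1) * 2 ^ (((d : ℝ) + 3) / 2) * (∫ r in s..t, a r y)
        * (‖x - y + ∫ r in s..t, b r y‖ + ∫ r in s..t, a r y) ^ (-((d : ℝ) + 2)) :=
        norm_fderiv_poissonKernelRd_le hA
    _ ≤ poissonConst d * ((d : ℝ) + 1) * 2 ^ (((d : ℝ) + 3) / 2) * (a₁ * (t - s))
        * (M ^ ((d : ℝ) + 2) * (‖x - y‖ + (t - s)) ^ (-((d : ℝ) + 2))) := by
        gcongr
        exact rpow_neg_le_mul_rpow_neg (by positivity) hM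
          (norm_add_le_mul_norm_add ha₀ hb₁.le hτ.le hA₀ hB) (by positivity)
    _ = _ := by ring

theorem stmt_12 (d : ℕ) (hd : 1 ≤ d)
    (a : ℝ → EuclideanSpace ℝ (Fin d) → ℝ)
    (b : ℝ → EuclideanSpace ℝ (Fin d) → EuclideanSpace ℝ (Fin d))
    (ha : Measurable (Function.uncurry a)) (hb : Measurable (Function.uncurry b))
    (a₀ a₁ b₁ : ℝ) (ha₀ : 0 < a₀) (ha₁ : 0 < a₁) (hb₁ : 0 < b₁)
    (haBound : ∀ r : ℝ, ∀ y, 0 ≤ r → a₀ ≤ a r y ∧ a r y ≤ a₁)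
    (hbBound : ∀ r : ℝ, ∀ y, 0 ≤ r → ‖b r y‖ ≤ b₁) (T : ℝ) (hT : 0 < T) :
    ∃ C > (0 : ℝ), ∀ s t : ℝ, 0 ≤ s → s < t → t ≤ T →
      ∀ x y : EuclideanSpace ℝ (Fin d),
        ‖fderiv ℝ (fun x' => p₀ d a b t x' s y) x‖
          ≤ C * (t - s) * (‖x - y‖ + (t - s)) ^ (-((d : ℝ) + 2)) :=
  stmt_12_general d a b ha a₀ a₁ b₁ ha₀ ha₁ hb₁ haBound hbBound T
end

section
/- Fix β ∈ (0, 1/4] and d ≥ 1. Define ϱ^β_γ(t,x) := t^γ(|x|^β ∧ 1)(|x|+t)^{-(d+1)}. Suppose a sequence of measurable functions q_n(t,x;s,y) (0 ≤ s < t ≤ 1, x,y ∈ ℝ^d) satisfies |q₀(t,x;s,y)| ≤ C_d ϱ^β_0(t-s, x-y) and q_n(t,x;s,y) = ∫_s^t ∫_{ℝ^d} q₀(t,x;r,z) q_{n-1}(r,z;s,y) dz dr. Then for all n ≥ 0, |q_n(t,x;s,y)| ≤ (C_d' Γ(β))^{n+1} / Γ((n+1)β) · ( ϱ^0_{(n+1)β}(t-s,x-y)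 + ϱ^β_{nβ}(t-s,x-y) ), for a constant C_d' depending only on d. -/
open MeasureTheory Real

noncomputable def varrho (d : ℕ) (β γ : ℝ) (t : ℝ) (x : EuclideanSpace ℝ (Fin d)) : ℝ :=
  t ^ γ * (min (‖x‖ ^ β) 1) * (‖x‖ + t) ^ (-((d : ℝ) + 1))

/-!
Induction on `n`, the step being the convolution inequality
`∫ₛᵗ ∫ ϱ^{β₁}_{γ₁}(t-r, x-z) ϱ^{β₂}_{γ₂}(r-s, z-y) dz dr
  ≤ C B(γ₁+β₁, γ₂+β₂) (ϱ^{β₂}_{γ₁+γ₂+β₁} + 2ϱ^0_{γ₁+γ₂+β₁+β₂} + ϱ^{β₁}_{γ₁+γ₂+β₂})(t-s, x-y)`.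
In space, one of `|x-z| + (t-r)` and `|z-y| + (r-s)` is at least half of `|x-y| + (t-s)`, which
pulls `(|x-y| + t - s)^{-d-1}` out of the product; the Hölder factors are redistributed by the
subadditivity of `r ↦ r^β ∧ 1`, and `∫ |w|^p (|w|+a)^{-d-1} dw = a^{p-1} ∫ |w|^p (|w|+1)^{-d-1} dw`
by scaling. What is left in time are Beta integrals, all dominated by `B(γ₁+β₁, γ₂+β₂)`. With
`ϱ^β_0` against the bound for `q_n`, the identity `Γ(β) Γ((n+1)β) = Γ((n+2)β) B(β, (n+1)β)` turns
the constant for `n` into the one for `n + 1`.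
-/

open ProbabilityTheory

theorem integral_rpow_mul_sub_rpow {T p q : ℝ} (hT : 0 < T) (hp : 0 < p) (hq : 0 < q) :
    ∫ x in (0 : ℝ)..T, x ^ (p - 1) * (T - x) ^ (q - 1) = T ^ (p + q - 1) * beta p q := by
  have h := Complex.betaIntegral_scaled p q hT
  rw [Complex.betaIntegral_eq_Gamma_mul_div _ _ (by simpa) (by simpa)] at h
  apply Complex.ofReal_injective
  rw [← intervalIntegral.integral_ofReal, beta, Complex.ofReal_mul, Complex.ofReal_cpow hT.le,
    Complex.ofReal_div, Complex.ofReal_mul, ← Complex.Gamma_ofReal, ← Complex.Gamma_ofReal,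
    ← Complex.Gamma_ofReal]
  push_cast
  rw [← h]
  refine intervalIntegral.integral_congr fun x hx => ?_
  rw [Set.uIcc_of_le hT.le] at hx
  rw [Complex.ofReal_cpow hx.1, Complex.ofReal_cpow (sub_nonneg.2 hx.2)]
  push_cast
  rfl

theorem integral_sub_rpow_mul_sub_rpow {s t e f : ℝ} (hst : s < t) (he : -1 < e) (hf : -1 < f) :
    ∫ r in s..t, (t - r) ^ e * (r - s) ^ f = (t - s) ^ (e + f + 1) * beta (e + 1) (f + 1) := by
  have h := integral_rpow_mul_sub_rpow (sub_pos.2 hst) (neg_lt_iff_pos_add.1 he)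
    (neg_lt_iff_pos_add.1 hf)
  simp only [add_sub_cancel_right] at h
  have hshift := intervalIntegral.integral_comp_sub_left (a := s) (b := t)
    (fun x => x ^ e * (t - s - x) ^ f) t
  simp only [sub_sub_sub_cancel_left, sub_self] at hshift
  rw [hshift, h]
  ring_nf

theorem intervalIntegrable_sub_rpow_mul_sub_rpow {s t e f : ℝ} (hst : s < t) (he : -1 < e)
    (hf : -1 < f) : IntervalIntegrable (fun r => (t - r) ^ e * (r - s) ^ f) volume s t :=
  intervalIntegral.intervalIntegrable_of_integral_ne_zero <| by
    rw [integral_sub_rpow_mul_sub_rpow hst he hf]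
    exact (mul_pos (rpow_pos_of_pos (sub_pos.2 hst) _)
      (beta_pos (neg_lt_iff_pos_add.1 he) (neg_lt_iff_pos_add.1 hf))).ne'

theorem beta_le_beta {p q p' q' : ℝ} (hp : 0 < p) (hq : 0 < q) (hpp' : p ≤ p') (hqq' : q ≤ q') :
    beta p' q' ≤ beta p q := by
  have hunit : ∀ {u v : ℝ}, 0 < u → 0 < v →
      ∫ x in (0 : ℝ)..1, x ^ (u - 1) * (1 - x) ^ (v - 1) = beta u v := fun hu hv => by
    simpa using integral_rpow_mul_sub_rpow one_pos hu hv
  have hint : ∀ {u v : ℝ}, 0 < u → 0 < v →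
      IntervalIntegrable (fun x => x ^ (u - 1) * (1 - x) ^ (v - 1)) volume 0 1 :=
    fun hu hv => intervalIntegral.intervalIntegrable_of_integral_ne_zero <| by
      rw [hunit hu hv]; exact (beta_pos hu hv).ne'
  have hp' := hp.trans_le hpp'
  have hq' := hq.trans_le hqq'
  rw [← hunit hp hq, ← hunit hp' hq']
  refine intervalIntegral.integral_mono_on_of_le_Ioo zero_le_one (hint hp' hq') (hint hp hq)
    fun x hx => mul_le_mul ?_ ?_ (rpow_nonneg (by linarith [hx.2]) _) (rpow_nonneg hx.1.le _)
  · exact rpow_le_rpow_of_exponent_ge hx.1 hx.2.le (by linarith)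
  · exact rpow_le_rpow_of_exponent_ge (by linarith [hx.2]) (by linarith [hx.1]) (by linarith)

theorem pow_div_Gamma_mul_beta {β : ℝ} (hβ : 0 < β) (C : ℝ) (n : ℕ) :
    (C * Gamma β) ^ (n + 1) / Gamma ((n + 1) * β) * (C * beta β ((n + 1) * β))
      = (C * Gamma β) ^ (n + 1 + 1) / Gamma ((n + 1 + 1) * β) := by
  have h₁ := (Gamma_pos_of_pos (by positivity : 0 < ((n : ℝ) + 1) * β)).ne'
  have h₂ := (Gamma_pos_of_pos (by positivity : 0 < ((n : ℝ) + 1 + 1) * β)).ne'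
  rw [beta, show β + (n + 1) * β = (n + 1 + 1) * β by ring]
  field_simp
  ring

theorem min_add_le_min_add_min {u v c : ℝ} (hu : 0 ≤ u) (hv : 0 ≤ v) (hc : 0 ≤ c) :
    min (u + v) c ≤ min u c + min v c := by
  simp only [min_def]; split_ifs <;> linarith

theorem min_rpow_one_le_add_of_le_add {β x y z : ℝ} (hβ0 : 0 ≤ β) (hβ1 : β ≤ 1) (hx : 0 ≤ x)
    (hy : 0 ≤ y) (hz : 0 ≤ z) (hxyz : x ≤ y + z) :
    min (x ^ β) 1 ≤ min (y ^ β) 1 + min (z ^ β) 1 :=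
  calc min (x ^ β) 1 ≤ min (y ^ β + z ^ β) 1 := by
        gcongr
        exact (rpow_le_rpow hx hxyz hβ0).trans (rpow_add_le_add_rpow hy hz hβ0 hβ1)
    _ ≤ min (y ^ β) 1 + min (z ^ β) 1 :=
        min_add_le_min_add_min (by positivity) (by positivity) zero_le_one

theorem min_rpow_mul_min_rpow_le {β₁ β₂ x y z : ℝ} (hβ₁ : 0 ≤ β₁) (hβ₂0 : 0 ≤ β₂) (hβ₂1 : β₂ ≤ 1)
    (hx : 0 ≤ x) (hy : 0 ≤ y) (hz : 0 ≤ z) (hyzx : y ≤ z + x) :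
    min (x ^ β₁) 1 * min (y ^ β₂) 1 ≤ min (z ^ β₂) 1 * x ^ β₁ + x ^ (β₁ + β₂) :=
  calc min (x ^ β₁) 1 * min (y ^ β₂) 1 ≤ x ^ β₁ * (min (z ^ β₂) 1 + x ^ β₂) :=
        mul_le_mul (min_le_left _ _)
          ((min_rpow_one_le_add_of_le_add hβ₂0 hβ₂1 hy hz hx hyzx).trans
            (by gcongr; exact min_le_left _ _))
          (le_min (by positivity) zero_le_one) (by positivity)
    _ = min (z ^ β₂) 1 * x ^ β₁ + x ^ (β₁ + β₂) := by rw [rpow_add_of_nonneg hx hβ₁ hβ₂0]; ring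

theorem rpow_neg_mul_rpow_neg_le {D A B X : ℝ} (hD : 0 ≤ D) (hA : 0 < A) (hB : 0 < B) (hX : 0 < X)
    (hXAB : X ≤ A + B) :
    A ^ (-D) * B ^ (-D) ≤ 2 ^ D * X ^ (-D) * (A ^ (-D) + B ^ (-D)) := by
  wlog hAB : A ≤ B generalizing A B
  · have := this hB hA (by linarith) (by linarith)
    rwa [mul_comm, add_comm]
  have hhalf : (X / 2) ^ (-D) = 2 ^ D * X ^ (-D) := by
    rw [div_rpow hX.le zero_le_two, rpow_neg zero_le_two, div_inv_eq_mul, mul_comm]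
  calc A ^ (-D) * B ^ (-D) ≤ A ^ (-D) * (X / 2) ^ (-D) := by
        refine mul_le_mul_of_nonneg_left ?_ (by positivity)
        exact rpow_le_rpow_of_nonpos (half_pos hX) (by linarith) (neg_nonpos.2 hD)
    _ ≤ 2 ^ D * X ^ (-D) * (A ^ (-D) + B ^ (-D)) := by
        rw [hhalf, mul_comm]
        gcongr
        exact le_add_of_nonneg_right (by positivity)

noncomputable def decayKernel (d : ℕ) (p a : ℝ) (w : EuclideanSpace ℝ (Fin d)) : ℝ :=
  ‖w‖ ^ p * (‖w‖ + a) ^ (-((d : ℝ) + 1))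

noncomputable def decayConst (d : ℕ) : ℝ :=
  ∫ w : EuclideanSpace ℝ (Fin d), (1 + ‖w‖) ^ (-((d : ℝ) + 1 / 2))

theorem decayConst_nonneg (d : ℕ) : 0 ≤ decayConst d :=
  integral_nonneg fun _ => rpow_nonneg (by positivity) _

namespace decayKernel

variable {d : ℕ} {p a : ℝ}

theorem nonneg (ha : 0 ≤ a) (w : EuclideanSpace ℝ (Fin d)) : 0 ≤ decayKernel d p a w := by
  unfold decayKernel; positivity

theorem le_one_add_norm_rpow (hp0 : 0 ≤ p) (hp : p ≤ 1 / 2) (w : EuclideanSpace ℝ (Fin d)) :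
    decayKernel d p 1 w ≤ (1 + ‖w‖) ^ (-((d : ℝ) + 1 / 2)) := by
  have h1 : (1 : ℝ) ≤ 1 + ‖w‖ := by simp
  calc decayKernel d p 1 w ≤ (1 + ‖w‖) ^ p * (1 + ‖w‖) ^ (-((d : ℝ) + 1)) := by
        rw [decayKernel, add_comm ‖w‖]
        gcongr
        simp
    _ = (1 + ‖w‖) ^ (p - ((d : ℝ) + 1)) := by rw [← rpow_add (by positivity), sub_eq_add_neg]
    _ ≤ (1 + ‖w‖) ^ (-((d : ℝ) + 1 / 2)) := rpow_le_rpow_of_exponent_le h1 (by linarith)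

theorem integrable_one (hp0 : 0 ≤ p) (hp : p ≤ 1 / 2) : Integrable (decayKernel d p 1) := by
  refine Integrable.mono' (integrable_one_add_norm (r := (d : ℝ) + 1 / 2) ?_)
    (by unfold decayKernel; fun_prop) (ae_of_all _ fun w => ?_)
  · simp
  · rw [norm_of_nonneg (nonneg zero_le_one w)]
    exact le_one_add_norm_rpow hp0 hp w

theorem eq_rpow_mul_inv_smul (ha : 0 < a) (w : EuclideanSpace ℝ (Fin d)) :
    decayKernel d p a w = a ^ (p - ((d : ℝ) + 1)) * decayKernel d p 1 (a⁻¹ • w) := by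
  have hnorm : ‖a⁻¹ • w‖ = a⁻¹ * ‖w‖ := by rw [norm_smul, norm_inv, norm_of_nonneg ha.le]
  have hsum : a⁻¹ * ‖w‖ + 1 = a⁻¹ * (‖w‖ + a) := by field_simp
  rw [decayKernel, decayKernel, hnorm, hsum, mul_rpow (by positivity) (norm_nonneg _),
    mul_rpow (by positivity) (by positivity), sub_eq_add_neg, rpow_add ha]
  simp only [inv_rpow ha.le, rpow_neg ha.le]
  field_simp

theorem integrable (ha : 0 < a) (hp0 : 0 ≤ p) (hp : p ≤ 1 / 2) :
    Integrable (decayKernel d p a) := by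
  simp_rw [funext (eq_rpow_mul_inv_smul ha)]
  exact ((integrable_one hp0 hp).comp_smul (inv_ne_zero ha.ne')).const_mul _

theorem integral_eq (ha : 0 < a) :
    ∫ w, decayKernel d p a w = a ^ (p - 1) * ∫ w, decayKernel d p 1 w := by
  simp_rw [eq_rpow_mul_inv_smul ha (p := p)]
  rw [integral_const_mul,
    Measure.integral_comp_inv_smul_of_nonneg volume (decayKernel d p 1) ha.le,
    finrank_euclideanSpace_fin, smul_eq_mul, ← mul_assoc, ← rpow_natCast, ← rpow_add ha]
  ring_nf

theorem integral_le (ha : 0 < a) (hp0 : 0 ≤ p) (hp : p ≤ 1 / 2) :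
    ∫ w, decayKernel d p a w ≤ decayConst d * a ^ (p - 1) := by
  rw [integral_eq ha, mul_comm]
  gcongr
  exact integral_mono (integrable_one hp0 hp) (integrable_one_add_norm (by simp))
    (le_one_add_norm_rpow hp0 hp)

end decayKernel

noncomputable def decayMajorant (d : ℕ) (β₁ β₂ a b : ℝ) (x y z : EuclideanSpace ℝ (Fin d)) : ℝ :=
  min (‖x - y‖ ^ β₂) 1 * decayKernel d β₁ a (x - z) + decayKernel d (β₁ + β₂) a (x - z)
    + (min (‖x - y‖ ^ β₁) 1 * decayKernel d β₂ b (z - y) + decayKernel d (β₁ + β₂) b (z - y))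

section decayMajorant

variable {d : ℕ} {β₁ β₂ a b : ℝ}

theorem integrable_decayMajorant (hβ₁ : 0 ≤ β₁) (hβ₂ : 0 ≤ β₂) (hβ : β₁ + β₂ ≤ 1 / 2)
    (ha : 0 < a) (hb : 0 < b) (x y : EuclideanSpace ℝ (Fin d)) :
    Integrable (decayMajorant d β₁ β₂ a b x y) :=
  ((((decayKernel.integrable ha hβ₁ (by linarith)).comp_sub_left x).const_mul _).add
    ((decayKernel.integrable ha (by positivity) hβ).comp_sub_left x)).add
    ((((decayKernel.integrable hb hβ₂ (by linarith)).comp_sub_right y).const_mul _).add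
    ((decayKernel.integrable hb (by positivity) hβ).comp_sub_right y))

theorem integral_decayMajorant_le (hβ₁ : 0 ≤ β₁) (hβ₂ : 0 ≤ β₂) (hβ : β₁ + β₂ ≤ 1 / 2)
    (ha : 0 < a) (hb : 0 < b) (x y : EuclideanSpace ℝ (Fin d)) :
    ∫ z, decayMajorant d β₁ β₂ a b x y z
      ≤ decayConst d * (min (‖x - y‖ ^ β₂) 1 * a ^ (β₁ - 1) + a ^ (β₁ + β₂ - 1)
        + (min (‖x - y‖ ^ β₁) 1 * b ^ (β₂ - 1) + b ^ (β₁ + β₂ - 1))) := by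
  have h₁ := ((decayKernel.integrable ha hβ₁ (by linarith)).comp_sub_left x).const_mul
    (min (‖x - y‖ ^ β₂) 1)
  have h₂ := (decayKernel.integrable ha (by positivity) hβ).comp_sub_left x
  have h₃ := ((decayKernel.integrable hb hβ₂ (by linarith)).comp_sub_right y).const_mul
    (min (‖x - y‖ ^ β₁) 1)
  have h₄ := (decayKernel.integrable hb (by positivity) hβ).comp_sub_right y
  have := le_min (rpow_nonneg (norm_nonneg (x - y)) β₁) zero_le_one
  have := le_min (rpow_nonneg (norm_nonneg (x - y)) β₂) zero_le_one
  unfold decayMajorant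
  rw [integral_add, integral_add h₁ h₂, integral_add h₃ h₄, integral_const_mul, integral_const_mul,
    integral_sub_left_eq_self (decayKernel d β₁ a),
    integral_sub_left_eq_self (decayKernel d (β₁ + β₂) a),
    integral_sub_right_eq_self (decayKernel d β₂ b),
    integral_sub_right_eq_self (decayKernel d (β₁ + β₂) b)]
  calc _ ≤ min (‖x - y‖ ^ β₂) 1 * (decayConst d * a ^ (β₁ - 1))
        + decayConst d * a ^ (β₁ + β₂ - 1) + (min (‖x - y‖ ^ β₁) 1 * (decayConst d * b ^ (β₂ - 1))
          + decayConst d * b ^ (β₁ + β₂ - 1)) := by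
        gcongr
        · exact decayKernel.integral_le ha hβ₁ (by linarith)
        · exact decayKernel.integral_le ha (by positivity) hβ
        · exact decayKernel.integral_le hb hβ₂ (by linarith)
        · exact decayKernel.integral_le hb (by positivity) hβ
    _ = _ := by ring
  · exact h₁.add h₂
  · exact h₃.add h₄

end decayMajorant

noncomputable def convConst (d : ℕ) : ℝ := 2 ^ ((d : ℝ) + 1) * decayConst d

theorem convConst_nonneg (d : ℕ) : 0 ≤ convConst d :=
  mul_nonneg (by positivity) (decayConst_nonneg d)

section Convolution

variable {d : ℕ} {β₁ β₂ γ₁ γ₂ a b s t : ℝ}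

theorem varrho_nonneg (β γ : ℝ) {t : ℝ} (ht : 0 ≤ t) (x : EuclideanSpace ℝ (Fin d)) :
    0 ≤ varrho d β γ t x := by
  have : 0 ≤ min (‖x‖ ^ β) 1 := le_min (by positivity) zero_le_one
  unfold varrho; positivity

theorem varrho_mul_varrho_le (hβ₁0 : 0 ≤ β₁) (hβ₁1 : β₁ ≤ 1) (hβ₂0 : 0 ≤ β₂) (hβ₂1 : β₂ ≤ 1)
    (ha : 0 < a) (hb : 0 < b) (x y z : EuclideanSpace ℝ (Fin d)) :
    varrho d β₁ γ₁ a (x - z) * varrho d β₂ γ₂ b (z - y)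
      ≤ 2 ^ ((d : ℝ) + 1) * (‖x - y‖ + (a + b)) ^ (-((d : ℝ) + 1)) * a ^ γ₁ * b ^ γ₂ *
        decayMajorant d β₁ β₂ a b x y z := by
  have hxz : ‖x - z‖ ≤ ‖x - y‖ + ‖z - y‖ :=
    (norm_sub_le_norm_sub_add_norm_sub x y z).trans_eq (by rw [norm_sub_rev y z])
  have hzy : ‖z - y‖ ≤ ‖x - y‖ + ‖x - z‖ :=
    (norm_sub_le_norm_sub_add_norm_sub z x y).trans_eq (by rw [norm_sub_rev z x, add_comm])
  have hleft := min_rpow_mul_min_rpow_le hβ₁0 hβ₂0 hβ₂1 (norm_nonneg (x - z))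
    (norm_nonneg (z - y)) (norm_nonneg (x - y)) hzy
  have hright := min_rpow_mul_min_rpow_le hβ₂0 hβ₁0 hβ₁1 (norm_nonneg (z - y))
    (norm_nonneg (x - z)) (norm_nonneg (x - y)) hxz
  rw [mul_comm, add_comm β₂] at hright
  unfold varrho decayMajorant decayKernel
  set D : ℝ := (d : ℝ) + 1
  set A := ‖x - z‖ + a
  set B := ‖z - y‖ + b
  set X := ‖x - y‖ + (a + b)
  have hsplit : A ^ (-D) * B ^ (-D) ≤ 2 ^ D * X ^ (-D) * (A ^ (-D) + B ^ (-D)) :=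
    rpow_neg_mul_rpow_neg_le (by positivity) (by positivity) (by positivity) (by positivity)
      (by linarith [norm_sub_le_norm_sub_add_norm_sub x z y])
  calc _ = a ^ γ₁ * b ^ γ₂ * (min (‖x - z‖ ^ β₁) 1 * min (‖z - y‖ ^ β₂) 1) *
          (A ^ (-D) * B ^ (-D)) := by ring
    _ ≤ a ^ γ₁ * b ^ γ₂ * (min (‖x - z‖ ^ β₁) 1 * min (‖z - y‖ ^ β₂) 1) *
          (2 ^ D * X ^ (-D) * (A ^ (-D) + B ^ (-D))) := by gcongr
    _ = 2 ^ D * X ^ (-D) * a ^ γ₁ * b ^ γ₂ *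
          ((min (‖x - z‖ ^ β₁) 1 * min (‖z - y‖ ^ β₂) 1) * A ^ (-D)
            + (min (‖x - z‖ ^ β₁) 1 * min (‖z - y‖ ^ β₂) 1) * B ^ (-D)) := by ring
    _ ≤ 2 ^ D * X ^ (-D) * a ^ γ₁ * b ^ γ₂ *
          ((min (‖x - y‖ ^ β₂) 1 * ‖x - z‖ ^ β₁ + ‖x - z‖ ^ (β₁ + β₂)) * A ^ (-D)
            + (min (‖x - y‖ ^ β₁) 1 * ‖z - y‖ ^ β₂ + ‖z - y‖ ^ (β₁ + β₂)) * B ^ (-D)) := by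
        gcongr
    _ = _ := by ring

noncomputable def varrhoConvBound (d : ℕ) (β₁ β₂ γ₁ γ₂ : ℝ) (u : EuclideanSpace ℝ (Fin d))
    (a b : ℝ) : ℝ :=
  convConst d * (‖u‖ + (a + b)) ^ (-((d : ℝ) + 1)) *
    (min (‖u‖ ^ β₂) 1 * (a ^ (γ₁ + β₁ - 1) * b ^ γ₂) + a ^ (γ₁ + (β₁ + β₂) - 1) * b ^ γ₂
      + (min (‖u‖ ^ β₁) 1 * (a ^ γ₁ * b ^ (γ₂ + β₂ - 1)) + a ^ γ₁ * b ^ (γ₂ + (β₁ + β₂) - 1)))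

theorem integrable_varrho_mul_varrho (hβ₁ : 0 ≤ β₁) (hβ₂ : 0 ≤ β₂) (hβ : β₁ + β₂ ≤ 1 / 2)
    (ha : 0 < a) (hb : 0 < b) (x y : EuclideanSpace ℝ (Fin d)) :
    Integrable (fun z => varrho d β₁ γ₁ a (x - z) * varrho d β₂ γ₂ b (z - y)) :=
  ((integrable_decayMajorant hβ₁ hβ₂ hβ ha hb x y).const_mul _).mono'
    (by unfold varrho; fun_prop) (ae_of_all _ fun z =>
      (norm_of_nonneg (mul_nonneg (varrho_nonneg _ _ ha.le _) (varrho_nonneg _ _ hb.le _))).trans_le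
        (varrho_mul_varrho_le hβ₁ (by linarith) hβ₂ (by linarith) ha hb x y z))

theorem integral_varrho_mul_varrho_le (hβ₁ : 0 ≤ β₁) (hβ₂ : 0 ≤ β₂) (hβ : β₁ + β₂ ≤ 1 / 2)
    (ha : 0 < a) (hb : 0 < b) (x y : EuclideanSpace ℝ (Fin d)) :
    ∫ z, varrho d β₁ γ₁ a (x - z) * varrho d β₂ γ₂ b (z - y)
      ≤ varrhoConvBound d β₁ β₂ γ₁ γ₂ (x - y) a b := by
  set c := 2 ^ ((d : ℝ) + 1) * (‖x - y‖ + (a + b)) ^ (-((d : ℝ) + 1)) * a ^ γ₁ * b ^ γ₂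
  calc _ ≤ ∫ z, c * decayMajorant d β₁ β₂ a b x y z :=
        integral_mono (integrable_varrho_mul_varrho hβ₁ hβ₂ hβ ha hb x y)
          ((integrable_decayMajorant hβ₁ hβ₂ hβ ha hb x y).const_mul c)
          (fun z => varrho_mul_varrho_le hβ₁ (by linarith) hβ₂ (by linarith) ha hb x y z)
    _ ≤ c * (decayConst d * (min (‖x - y‖ ^ β₂) 1 * a ^ (β₁ - 1) + a ^ (β₁ + β₂ - 1)
          + (min (‖x - y‖ ^ β₁) 1 * b ^ (β₂ - 1) + b ^ (β₁ + β₂ - 1)))) := by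
        rw [integral_const_mul]
        gcongr
        exact integral_decayMajorant_le hβ₁ hβ₂ hβ ha hb x y
    _ = _ := by
        simp only [varrhoConvBound, convConst, c, sub_eq_add_neg _ (1 : ℝ), add_assoc,
          rpow_add ha, rpow_add hb]
        ring

theorem varrhoConvBound_sub (u : EuclideanSpace ℝ (Fin d)) (r : ℝ) :
    varrhoConvBound d β₁ β₂ γ₁ γ₂ u (t - r) (r - s)
      = convConst d * (‖u‖ + (t - s)) ^ (-((d : ℝ) + 1)) *
        (min (‖u‖ ^ β₂) 1 * ((t - r) ^ (γ₁ + β₁ - 1) * (r - s) ^ γ₂)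
          + (t - r) ^ (γ₁ + (β₁ + β₂) - 1) * (r - s) ^ γ₂
          + (min (‖u‖ ^ β₁) 1 * ((t - r) ^ γ₁ * (r - s) ^ (γ₂ + β₂ - 1))
            + (t - r) ^ γ₁ * (r - s) ^ (γ₂ + (β₁ + β₂) - 1))) := by
  rw [varrhoConvBound, sub_add_sub_cancel]

theorem intervalIntegrable_varrhoConvBound (hst : s < t) (hβ₁ : 0 ≤ β₁) (hβ₂ : 0 ≤ β₂)
    (hβ : β₁ + β₂ ≤ 1 / 2) (hγβ₁ : 0 < γ₁ + β₁) (hγβ₂ : 0 < γ₂ + β₂)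
    (u : EuclideanSpace ℝ (Fin d)) :
    IntervalIntegrable (fun r => varrhoConvBound d β₁ β₂ γ₁ γ₂ u (t - r) (r - s)) volume s t := by
  simp_rw [varrhoConvBound_sub]
  have hI : ∀ {e f : ℝ}, -1 < e → -1 < f →
      IntervalIntegrable (fun r => (t - r) ^ e * (r - s) ^ f) volume s t :=
    fun he hf => intervalIntegrable_sub_rpow_mul_sub_rpow hst he hf
  refine IntervalIntegrable.const_mul ?_ _
  exact ((((hI (by linarith) (by linarith)).const_mul _).add (hI (by linarith) (by linarith))).add
    (((hI (by linarith) (by linarith)).const_mul _).add (hI (by linarith) (by linarith))))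

theorem integral_varrhoConvBound (hst : s < t) (hβ₁ : 0 ≤ β₁) (hβ₂ : 0 ≤ β₂)
    (hβ : β₁ + β₂ ≤ 1 / 2) (hγβ₁ : 0 < γ₁ + β₁) (hγβ₂ : 0 < γ₂ + β₂)
    (u : EuclideanSpace ℝ (Fin d)) :
    ∫ r in s..t, varrhoConvBound d β₁ β₂ γ₁ γ₂ u (t - r) (r - s)
      = convConst d * (‖u‖ + (t - s)) ^ (-((d : ℝ) + 1)) *
        (min (‖u‖ ^ β₂) 1 * ((t - s) ^ (γ₁ + γ₂ + β₁) * beta (γ₁ + β₁) (γ₂ + 1))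
          + (t - s) ^ (γ₁ + γ₂ + β₁ + β₂) * beta (γ₁ + β₁ + β₂) (γ₂ + 1)
          + (min (‖u‖ ^ β₁) 1 * ((t - s) ^ (γ₁ + γ₂ + β₂) * beta (γ₁ + 1) (γ₂ + β₂))
            + (t - s) ^ (γ₁ + γ₂ + β₁ + β₂) * beta (γ₁ + 1) (γ₂ + β₁ + β₂))) := by
  have hI : ∀ {e f : ℝ}, -1 < e → -1 < f →
      IntervalIntegrable (fun r => (t - r) ^ e * (r - s) ^ f) volume s t :=
    fun he hf => intervalIntegrable_sub_rpow_mul_sub_rpow hst he hf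
  have h₁ := (hI (e := γ₁ + β₁ - 1) (f := γ₂) (by linarith) (by linarith)).const_mul
    (min (‖u‖ ^ β₂) 1)
  have h₂ := hI (e := γ₁ + (β₁ + β₂) - 1) (f := γ₂) (by linarith) (by linarith)
  have h₃ := (hI (e := γ₁) (f := γ₂ + β₂ - 1) (by linarith) (by linarith)).const_mul
    (min (‖u‖ ^ β₁) 1)
  have h₄ := hI (e := γ₁) (f := γ₂ + (β₁ + β₂) - 1) (by linarith) (by linarith)
  simp_rw [varrhoConvBound_sub]
  rw [intervalIntegral.integral_const_mul, intervalIntegral.integral_add (h₁.add h₂) (h₃.add h₄),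
    intervalIntegral.integral_add h₁ h₂, intervalIntegral.integral_add h₃ h₄,
    intervalIntegral.integral_const_mul, intervalIntegral.integral_const_mul,
    integral_sub_rpow_mul_sub_rpow hst (by linarith) (by linarith),
    integral_sub_rpow_mul_sub_rpow hst (by linarith) (by linarith),
    integral_sub_rpow_mul_sub_rpow hst (by linarith) (by linarith),
    integral_sub_rpow_mul_sub_rpow hst (by linarith) (by linarith)]
  ring_nf

theorem integral_varrhoConvBound_le (hst : s < t) (hβ₁ : 0 ≤ β₁) (hβ₂ : 0 ≤ β₂)
    (hβ : β₁ + β₂ ≤ 1 / 2) (hγβ₁ : 0 < γ₁ + β₁) (hγβ₂ : 0 < γ₂ + β₂)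
    (u : EuclideanSpace ℝ (Fin d)) :
    ∫ r in s..t, varrhoConvBound d β₁ β₂ γ₁ γ₂ u (t - r) (r - s)
      ≤ convConst d * beta (γ₁ + β₁) (γ₂ + β₂) *
        (varrho d β₂ (γ₁ + γ₂ + β₁) (t - s) u + 2 * varrho d 0 (γ₁ + γ₂ + β₁ + β₂) (t - s) u
          + varrho d β₁ (γ₁ + γ₂ + β₂) (t - s) u) := by
  have hB : ∀ {p q : ℝ}, γ₁ + β₁ ≤ p → γ₂ + β₂ ≤ q → beta p q ≤ beta (γ₁ + β₁) (γ₂ + β₂) :=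
    fun hp hq => beta_le_beta hγβ₁ hγβ₂ hp hq
  have hT : 0 ≤ t - s := (sub_pos.2 hst).le
  have := le_min (rpow_nonneg (norm_nonneg u) β₁) zero_le_one
  have := le_min (rpow_nonneg (norm_nonneg u) β₂) zero_le_one
  have := convConst_nonneg d
  rw [integral_varrhoConvBound hst hβ₁ hβ₂ hβ hγβ₁ hγβ₂]
  calc _ ≤ convConst d * (‖u‖ + (t - s)) ^ (-((d : ℝ) + 1)) *
        (min (‖u‖ ^ β₂) 1 * ((t - s) ^ (γ₁ + γ₂ + β₁) * beta (γ₁ + β₁) (γ₂ + β₂))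
          + (t - s) ^ (γ₁ + γ₂ + β₁ + β₂) * beta (γ₁ + β₁) (γ₂ + β₂)
          + (min (‖u‖ ^ β₁) 1 * ((t - s) ^ (γ₁ + γ₂ + β₂) * beta (γ₁ + β₁) (γ₂ + β₂))
            + (t - s) ^ (γ₁ + γ₂ + β₁ + β₂) * beta (γ₁ + β₁) (γ₂ + β₂))) := by
        gcongr <;> exact hB (by linarith) (by linarith)
    _ = _ := by
        simp only [varrho, rpow_zero, min_self]
        ring

theorem intervalIntegrable_integral_varrho_mul_varrho (hst : s < t) (hβ₁ : 0 ≤ β₁)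
    (hβ₂ : 0 ≤ β₂) (hβ : β₁ + β₂ ≤ 1 / 2) (hγβ₁ : 0 < γ₁ + β₁) (hγβ₂ : 0 < γ₂ + β₂)
    (x y : EuclideanSpace ℝ (Fin d)) :
    IntervalIntegrable
      (fun r => ∫ z, varrho d β₁ γ₁ (t - r) (x - z) * varrho d β₂ γ₂ (r - s) (z - y))
      volume s t := by
  have hB := intervalIntegrable_varrhoConvBound hst hβ₁ hβ₂ hβ hγβ₁ hγβ₂ (x - y)
  rw [intervalIntegrable_iff_integrableOn_Ioo_of_le hst.le] at hB ⊢
  refine hB.mono' ?_ (ae_restrict_of_forall_mem measurableSet_Ioo fun r hr => ?_)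
  · refine (StronglyMeasurable.integral_prod_right ?_).aestronglyMeasurable
    exact Measurable.stronglyMeasurable (by unfold varrho; fun_prop)
  · have ha : 0 < t - r := sub_pos.2 hr.2
    have hb : 0 < r - s := sub_pos.2 hr.1
    rw [norm_of_nonneg (integral_nonneg fun z =>
      mul_nonneg (varrho_nonneg _ _ ha.le _) (varrho_nonneg _ _ hb.le _))]
    exact integral_varrho_mul_varrho_le hβ₁ hβ₂ hβ ha hb x y

theorem integral_integral_varrho_mul_varrho_le (hst : s < t) (hβ₁ : 0 ≤ β₁) (hβ₂ : 0 ≤ β₂)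
    (hβ : β₁ + β₂ ≤ 1 / 2) (hγβ₁ : 0 < γ₁ + β₁) (hγβ₂ : 0 < γ₂ + β₂)
    (x y : EuclideanSpace ℝ (Fin d)) :
    ∫ r in s..t, ∫ z, varrho d β₁ γ₁ (t - r) (x - z) * varrho d β₂ γ₂ (r - s) (z - y)
      ≤ convConst d * beta (γ₁ + β₁) (γ₂ + β₂) *
        (varrho d β₂ (γ₁ + γ₂ + β₁) (t - s) (x - y)
          + 2 * varrho d 0 (γ₁ + γ₂ + β₁ + β₂) (t - s) (x - y)
          + varrho d β₁ (γ₁ + γ₂ + β₂) (t - s) (x - y)) :=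
  (intervalIntegral.integral_mono_on_of_le_Ioo hst.le
    (intervalIntegrable_integral_varrho_mul_varrho hst hβ₁ hβ₂ hβ hγβ₁ hγβ₂ x y)
    (intervalIntegrable_varrhoConvBound hst hβ₁ hβ₂ hβ hγβ₁ hγβ₂ (x - y))
    fun _ hr =>
      integral_varrho_mul_varrho_le hβ₁ hβ₂ hβ (sub_pos.2 hr.2) (sub_pos.2 hr.1) x y).trans
  (integral_varrhoConvBound_le hst hβ₁ hβ₂ hβ hγβ₁ hγβ₂ (x - y))

end Convolution

theorem abs_integral_integral_le {E : Type*} [MeasureSpace E] {f g₁ g₂ : ℝ → E → ℝ} {s t C : ℝ}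
    (hst : s ≤ t) (hf : ∀ r ∈ Set.Ioo s t, ∀ z, |f r z| ≤ C * (g₁ r z + g₂ r z))
    (hg₁ : ∀ r ∈ Set.Ioo s t, Integrable (g₁ r)) (hg₂ : ∀ r ∈ Set.Ioo s t, Integrable (g₂ r))
    (hG₁ : IntervalIntegrable (fun r => ∫ z, g₁ r z) volume s t)
    (hG₂ : IntervalIntegrable (fun r => ∫ z, g₂ r z) volume s t) :
    |∫ r in s..t, ∫ z, f r z| ≤ C * ((∫ r in s..t, ∫ z, g₁ r z) + ∫ r in s..t, ∫ z, g₂ r z) := by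
  rw [← intervalIntegral.integral_add hG₁ hG₂, ← intervalIntegral.integral_const_mul,
    ← norm_eq_abs]
  refine intervalIntegral.norm_integral_le_of_norm_le hst ?_ ((hG₁.add hG₂).const_mul C)
  filter_upwards [compl_mem_ae_iff.2 (measure_singleton t)] with r (hrt : r ≠ t) hr
  have hr' : r ∈ Set.Ioo s t := ⟨hr.1, lt_of_le_of_ne hr.2 hrt⟩
  rw [← integral_add (hg₁ r hr') (hg₂ r hr'), ← integral_const_mul]
  exact norm_integral_le_of_norm_le (((hg₁ r hr').add (hg₂ r hr')).const_mul C)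
    (ae_of_all _ (hf r hr'))

theorem integral_integral_varrho_mul_iterate_le {d : ℕ} {β κ s t : ℝ} (hβ0 : 0 < β)
    (hβ4 : β ≤ 1 / 4) (hκ : 0 ≤ κ) (hst : s < t) (x y : EuclideanSpace ℝ (Fin d)) :
    (∫ r in s..t, ∫ z, varrho d β 0 (t - r) (x - z) * varrho d 0 ((κ + 1) * β) (r - s) (z - y))
      + (∫ r in s..t, ∫ z, varrho d β 0 (t - r) (x - z) * varrho d β (κ * β) (r - s) (z - y))
      ≤ 5 * convConst d * beta β ((κ + 1) * β) *
        (varrho d 0 ((κ + 1 + 1) * β) (t - s) (x - y)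
          + varrho d β ((κ + 1) * β) (t - s) (x - y)) := by
  have h₁ := integral_integral_varrho_mul_varrho_le (γ₁ := 0) (γ₂ := (κ + 1) * β) hst hβ0.le
    le_rfl (by linarith) (by linarith) (by positivity) x y
  have h₂ := integral_integral_varrho_mul_varrho_le (γ₁ := 0) (γ₂ := κ * β) hst hβ0.le
    hβ0.le (by linarith) (by linarith) (by positivity) x y
  simp only [zero_add, add_zero] at h₁ h₂
  rw [show (κ + 1) * β + β = (κ + 1 + 1) * β by ring] at h₁
  rw [show κ * β + β = (κ + 1) * β by ring, show (κ + 1) * β + β = (κ + 1 + 1) * β by ring] at h₂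
  have hK : 0 ≤ convConst d * beta β ((κ + 1) * β) :=
    mul_nonneg (convConst_nonneg d) (beta_pos hβ0 (by positivity)).le
  have hv := varrho_nonneg (d := d) β ((κ + 1) * β) (sub_pos.2 hst).le (x - y)
  nlinarith

theorem abs_integral_integral_le_of_le_varrho_mul {d : ℕ} {K β κ s t : ℝ} (hβ0 : 0 < β)
    (hβ4 : β ≤ 1 / 4) (hκ : 0 ≤ κ) (hK : 0 ≤ K) (hst : s < t) (x y : EuclideanSpace ℝ (Fin d))
    {f : ℝ → EuclideanSpace ℝ (Fin d) → ℝ}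
    (hf : ∀ r ∈ Set.Ioo s t, ∀ z, |f r z|
      ≤ K * (varrho d β 0 (t - r) (x - z) * varrho d 0 ((κ + 1) * β) (r - s) (z - y)
        + varrho d β 0 (t - r) (x - z) * varrho d β (κ * β) (r - s) (z - y))) :
    |∫ r in s..t, ∫ z, f r z|
      ≤ K * (5 * convConst d * beta β ((κ + 1) * β) *
        (varrho d 0 ((κ + 1 + 1) * β) (t - s) (x - y)
          + varrho d β ((κ + 1) * β) (t - s) (x - y))) :=
  (abs_integral_integral_le hst.le hf
    (fun r hr => integrable_varrho_mul_varrho hβ0.le le_rfl (by linarith) (sub_pos.2 hr.2)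
      (sub_pos.2 hr.1) x y)
    (fun r hr => integrable_varrho_mul_varrho hβ0.le hβ0.le (by linarith) (sub_pos.2 hr.2)
      (sub_pos.2 hr.1) x y)
    (intervalIntegrable_integral_varrho_mul_varrho hst hβ0.le le_rfl (by linarith) (by linarith)
      (by positivity) x y)
    (intervalIntegrable_integral_varrho_mul_varrho hst hβ0.le hβ0.le (by linarith) (by linarith)
      (by positivity) x y)).trans
  (mul_le_mul_of_nonneg_left (integral_integral_varrho_mul_iterate_le hβ0 hβ4 hκ hst x y) hK)

noncomputable def iterBound (d : ℕ) (C β : ℝ) (n : ℕ) (t : ℝ) (x : EuclideanSpace ℝ (Fin d)) :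
    ℝ :=
  (C * Gamma β) ^ (n + 1) / Gamma ((n + 1) * β)
    * (varrho d 0 ((n + 1) * β) t x + varrho d β (n * β) t x)

theorem mul_varrho_le_iterBound_zero {d : ℕ} {Cd C β t : ℝ} (hβ : 0 < β) (hCd : 0 ≤ Cd)
    (hC : Cd ≤ C) (ht : 0 ≤ t) (x : EuclideanSpace ℝ (Fin d)) :
    Cd * varrho d β 0 t x ≤ iterBound d C β 0 t x := by
  have h₀ := varrho_nonneg (d := d) 0 β ht x
  have hv := varrho_nonneg (d := d) β 0 ht x
  simp only [iterBound, Nat.cast_zero, zero_mul, zero_add, one_mul, pow_one]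
  rw [mul_div_assoc, div_self (Gamma_pos_of_pos hβ).ne', mul_one]
  nlinarith

theorem abs_integral_integral_le_iterBound {d : ℕ} {Cd C β s t : ℝ} {n : ℕ}
    {q₀ qₙ : ℝ → EuclideanSpace ℝ (Fin d) → ℝ → EuclideanSpace ℝ (Fin d) → ℝ}
    (hβ0 : 0 < β) (hβ4 : β ≤ 1 / 4) (hCd : 0 ≤ Cd) (hC : Cd * (5 * convConst d) ≤ C)
    (h₀ : ∀ s t : ℝ, ∀ x y, 0 ≤ s → s < t → t ≤ 1 →
      |q₀ t x s y| ≤ Cd * varrho d β 0 (t - s) (x - y))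
    (hₙ : ∀ s t : ℝ, ∀ x y, 0 ≤ s → s < t → t ≤ 1 →
      |qₙ t x s y| ≤ iterBound d C β n (t - s) (x - y))
    (hs : 0 ≤ s) (hst : s < t) (ht : t ≤ 1) (x y : EuclideanSpace ℝ (Fin d)) :
    |∫ r in s..t, ∫ z, q₀ t x r z * qₙ r z s y| ≤ iterBound d C β (n + 1) (t - s) (x - y) := by
  set M := (C * Gamma β) ^ (n + 1) / Gamma ((n + 1) * β)
  have hC0 : 0 ≤ C := (mul_nonneg hCd (by linarith [convConst_nonneg d])).trans hC
  have hM : 0 ≤ M :=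
    div_nonneg (by have := Gamma_pos_of_pos hβ0; positivity) (Gamma_pos_of_pos (by positivity)).le
  have hpt : ∀ r ∈ Set.Ioo s t, ∀ z, |q₀ t x r z * qₙ r z s y|
      ≤ Cd * M * (varrho d β 0 (t - r) (x - z) * varrho d 0 ((n + 1) * β) (r - s) (z - y)
        + varrho d β 0 (t - r) (x - z) * varrho d β (n * β) (r - s) (z - y)) := by
    intro r hr z
    rw [abs_mul, ← mul_add, mul_mul_mul_comm]
    exact mul_le_mul (h₀ r t x z (hs.trans hr.1.le) hr.2 ht) (hₙ s r z y hs hr.1 (hr.2.le.trans ht))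
      (abs_nonneg _) (mul_nonneg hCd (varrho_nonneg _ _ (sub_pos.2 hr.2).le _))
  have hV : 0 ≤ M * beta β ((n + 1) * β) * (varrho d 0 ((n + 1 + 1) * β) (t - s) (x - y)
      + varrho d β ((n + 1) * β) (t - s) (x - y)) := by
    have := beta_pos hβ0 (by positivity : 0 < ((n : ℝ) + 1) * β)
    have := varrho_nonneg (d := d) 0 ((n + 1 + 1) * β) (sub_pos.2 hst).le (x - y)
    have := varrho_nonneg (d := d) β ((n + 1) * β) (sub_pos.2 hst).le (x - y)
    positivity
  calc _ ≤ Cd * M * (5 * convConst d * beta β ((n + 1) * β) *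
          (varrho d 0 ((n + 1 + 1) * β) (t - s) (x - y)
            + varrho d β ((n + 1) * β) (t - s) (x - y))) :=
        abs_integral_integral_le_of_le_varrho_mul hβ0 hβ4 n.cast_nonneg (mul_nonneg hCd hM) hst
          x y hpt
    _ ≤ M * (C * beta β ((n + 1) * β)) * (varrho d 0 ((n + 1 + 1) * β) (t - s) (x - y)
          + varrho d β ((n + 1) * β) (t - s) (x - y)) := by
        linear_combination mul_le_mul_of_nonneg_left hC hV
    _ = iterBound d C β (n + 1) (t - s) (x - y) := by
        rw [pow_div_Gamma_mul_beta hβ0, iterBound]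
        push_cast
        rfl

theorem stmt_14_general (d : ℕ) (Cd : ℝ) (hCd : 0 < Cd) :
    ∃ C' > (0 : ℝ), ∀ β : ℝ, 0 < β → β ≤ 1/4 →
      ∀ q : ℕ → ℝ → EuclideanSpace ℝ (Fin d) → ℝ → EuclideanSpace ℝ (Fin d) → ℝ,
        (∀ s t : ℝ, ∀ x y, 0 ≤ s → s < t → t ≤ 1 →
          |q 0 t x s y| ≤ Cd * varrho d β 0 (t - s) (x - y)) →
        (∀ n : ℕ, ∀ s t : ℝ, ∀ x y, 0 ≤ s → s < t → t ≤ 1 →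
          q (n + 1) t x s y
            = ∫ r in s..t, ∫ z : EuclideanSpace ℝ (Fin d), q 0 t x r z * q n r z s y) →
        ∀ n : ℕ, ∀ s t : ℝ, ∀ x y, 0 ≤ s → s < t → t ≤ 1 →
          |q n t x s y|
            ≤ (C' * Real.Gamma β) ^ (n + 1) / Real.Gamma ((n + 1) * β)
              * (varrho d 0 ((n + 1) * β) (t - s) (x - y)
                  + varrho d β (n * β) (t - s) (x - y)) := by
  have hK := convConst_nonneg d
  refine ⟨Cd * (1 + 5 * convConst d), mul_pos hCd (by linarith), fun β hβ0 hβ4 q hq₀ hrec n => ?_⟩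
  induction n with
  | zero =>
    intro s t x y hs hst ht
    exact (hq₀ s t x y hs hst ht).trans (mul_varrho_le_iterBound_zero hβ0 hCd.le
      (le_mul_of_one_le_right hCd.le (by linarith)) (sub_pos.2 hst).le (x - y))
  | succ n ih =>
    intro s t x y hs hst ht
    rw [hrec n s t x y hs hst ht]
    exact abs_integral_integral_le_iterBound hβ0 hβ4 hCd.le
      (mul_le_mul_of_nonneg_left (by linarith) hCd.le) hq₀ ih hs hst ht x y

theorem stmt_14 (d : ℕ) (hd : 1 ≤ d) (Cd : ℝ) (hCd : 0 < Cd) :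
    ∃ C' > (0 : ℝ), ∀ β : ℝ, 0 < β → β ≤ 1/4 →
      ∀ q : ℕ → ℝ → EuclideanSpace ℝ (Fin d) → ℝ → EuclideanSpace ℝ (Fin d) → ℝ,
        (∀ s t : ℝ, ∀ x y, 0 ≤ s → s < t → t ≤ 1 →
          |q 0 t x s y| ≤ Cd * varrho d β 0 (t - s) (x - y)) →
        (∀ n : ℕ, ∀ s t : ℝ, ∀ x y, 0 ≤ s → s < t → t ≤ 1 →
          q (n + 1) t x s y
            = ∫ r in s..t, ∫ z : EuclideanSpace ℝ (Fin d), q 0 t x r z * q n r z s y) →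
        ∀ n : ℕ, ∀ s t : ℝ, ∀ x y, 0 ≤ s → s < t → t ≤ 1 →
          |q n t x s y|
            ≤ (C' * Real.Gamma β) ^ (n + 1) / Real.Gamma ((n + 1) * β)
              * (varrho d 0 ((n + 1) * β) (t - s) (x - y)
                  + varrho d β (n * β) (t - s) (x - y)) :=
  stmt_14_general d Cd hCd
end
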